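/- arXiv:1004.1168 — 6 statements merged into one kernel-verified Lean document; each statement's English description precedes it below -/
import Mathlib

section
/- For every a = (a_1,…,a_n) ∈ ℂ^n, the formulas X_{ε_i-ε_j}·x^b = (a_j+b_j) x^{b+ε_i-ε_j}, X_{ε_i+ε_j}·x^b = x^{b+ε_i+ε_j}, X_{-ε_i-ε_j}·x^b = (a_i+b_i)(a_j+b_j) x^{b-ε_i-ε_j}, X_{-2ε_i}·x^b = (a_i+b_i)(a_i+b_i-1) x^{b-2ε_i}, H_{ε_{i+1}-ε_i}·x^b = (a_{i+1}+b_{i+1}-a_i-b_i) x^b, H_{2ε_1}·x^b = (1/2)(2a_1+2b_1+1) x^b define on the vector space N(a) with basis {x^b : b ∈ B} the structure of an sp_{2n}(ℂ)-module in which every weight space is at most one-dimensional. -/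
open Matrix

attribute [local instance 100] LieRing.ofAssociativeRing

variable {n : ℕ}

abbrev spC (n : ℕ) : LieSubalgebra ℂ (Matrix (Fin n ⊕ Fin n) (Fin n ⊕ Fin n) ℂ) :=
  LieAlgebra.Symplectic.sp (Fin n) ℂ

lemma mem_spC {A B C D : Matrix (Fin n) (Fin n) ℂ} (hB : Bᵀ = B) (hC : Cᵀ = C)
    (hD : D = -Aᵀ) : fromBlocks A B C D ∈ spC n := by
  rw [show spC n = skewAdjointMatricesLieSubalgebra (Matrix.J (Fin n) ℂ) from rfl,
    mem_skewAdjointMatricesLieSubalgebra, mem_skewAdjointMatricesSubmodule]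
  show _ᵀ * _ = _ * _
  rw [Matrix.J]
  simp [Matrix.fromBlocks_transpose, Matrix.fromBlocks_multiply, hB, hC, hD,
    Matrix.fromBlocks_neg]

noncomputable def Egl (i j : Fin n) : Matrix (Fin n) (Fin n) ℂ := Matrix.single i j 1

lemma Egl_t (i j : Fin n) : (Egl i j)ᵀ = Egl j i := by
  ext k l
  simp [Egl, Matrix.single, Matrix.transpose_apply, and_comm]

/-- embedding of `gl n` into `sp`; `Xgl A` corresponds to `fromBlocks A 0 0 (-Aᵀ)`. -/
noncomputable def Xgl (A : Matrix (Fin n) (Fin n) ℂ) : spC n :=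
  ⟨fromBlocks A 0 0 (-Aᵀ), mem_spC (by simp) (by simp) rfl⟩

/-- the root vector `X_{ε i - ε j}` (for `i ≠ j`). -/
noncomputable def Xem (i j : Fin n) : spC n := Xgl (Egl i j)

/-- the root vector `X_{ε i + ε j}` (equals `X_{2 ε i}` for `i = j` up to normalization). -/
noncomputable def Xep (i j : Fin n) : spC n :=
  ⟨fromBlocks 0 (Egl i j + Egl j i) 0 0,
    mem_spC (by simp [Egl_t, add_comm]) (by simp) (by simp)⟩

/-- the root vector `X_{-ε i - ε j}`. -/
noncomputable def Xm (i j : Fin n) : spC n :=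
  ⟨fromBlocks 0 0 (-(Egl i j + Egl j i)) 0,
    mem_spC (by simp) (by simp [Egl_t, add_comm]) (by simp)⟩

/-- the Cartan element `H_{ε j - ε i}`. -/
noncomputable def Hem (i j : Fin n) : spC n := Xgl (Egl j j - Egl i i)

/-- the Cartan element `H_{2 ε 1}` (1 being the first index, i.e. `0 : Fin n`). -/
noncomputable def H2e1 [NeZero n] : spC n := Xgl (Egl 0 0)

/-- a general element `Hdiag c` of the Cartan subalgebra of `sp`,
on which `ε i` takes the value `c i`. -/
noncomputable def Hdiag (c : Fin n → ℂ) : spC n := Xgl (diagonal c)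

/-- the lattice of allowed exponents: integer vectors with even coordinate sum. -/
def Blat (n : ℕ) : AddSubgroup (Fin n → ℤ) where
  carrier := {b | Even (∑ i, b i)}
  add_mem' := by
    intro x y hx hy
    simpa [Finset.sum_add_distrib] using hx.add hy
  zero_mem' := by simp
  neg_mem' := by
    intro x hx
    simpa [Finset.sum_neg_distrib] using hx.neg

/-- the shift `ε i - ε j` as an element of the lattice `Blat n`. -/
def dem (i j : Fin n) : Blat n :=
  ⟨Pi.single i 1 - Pi.single j 1, by
    have : ∑ k, (Pi.single i 1 - Pi.single j 1 : Fin n → ℤ) k = 0 := by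
      simp [Finset.sum_sub_distrib, Finset.sum_pi_single']
    simp [AddSubgroup.mem_mk, Blat, this]⟩

/-- the shift `ε i + ε j` as an element of the lattice `Blat n`. -/
def dep (i j : Fin n) : Blat n :=
  ⟨Pi.single i 1 + Pi.single j 1, by
    have : ∑ k, (Pi.single i 1 + Pi.single j 1 : Fin n → ℤ) k = 2 := by
      simp [Finset.sum_add_distrib, Finset.sum_pi_single']
    show Even (∑ k, (Pi.single i 1 + Pi.single j 1 : Fin n → ℤ) k)
    rw [this]
    decide⟩


set_option linter.unusedSectionVars false
set_option linter.unusedVariables false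
set_option linter.unreachableTactic false
set_option linter.unusedTactic false

noncomputable abbrev Vfull (n : ℕ) := (Fin n → ℤ) →₀ ℂ

/-- weighted shift operator on the full space -/
noncomputable def Wop (g : (Fin n → ℤ) → ℂ) (d : Fin n → ℤ) : Module.End ℂ (Vfull n) :=
  Finsupp.lsum ℂ (fun b => g b • Finsupp.lsingle (b + d))

lemma Wop_single (g : (Fin n → ℤ) → ℂ) (d b : Fin n → ℤ) (c : ℂ) :
    Wop g d (Finsupp.single b c) = (c * g b) • Finsupp.single (b + d) 1 := by
  simp [Wop, Finsupp.smul_single, mul_comm]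

lemma Wop_comp (g h : (Fin n → ℤ) → ℂ) (d e : Fin n → ℤ) :
    Wop g d * Wop h e = Wop (fun b => h b * g (b + e)) (d + e) := by
  apply Finsupp.lhom_ext
  intro b c
  show Wop g d (Wop h e _) = _
  rw [Wop_single, _root_.map_smul, Wop_single, Wop_single]
  rw [smul_smul, add_assoc]
  ring_nf

lemma Wop_add (g h : (Fin n → ℤ) → ℂ) (d : Fin n → ℤ) :
    Wop (g + h) d = Wop g d + Wop h d := by
  apply Finsupp.lhom_ext
  intro b c
  simp [Wop_single, add_smul, mul_add]

lemma Wop_congr (g h : (Fin n → ℤ) → ℂ) (d e : Fin n → ℤ) (hg : g = h) (hd : d = e) :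
    Wop g d = Wop h e := by rw [hg, hd]

lemma Wop_one_zero : Wop (n := n) (fun _ => 1) 0 = 1 := by
  apply Finsupp.lhom_ext
  intro b c
  simp [Wop_single]

noncomputable def Jm (n : ℕ) : Matrix (Fin n ⊕ Fin n) (Fin n ⊕ Fin n) ℂ :=
  fromBlocks 0 1 (-1) 0

lemma Jm_t : (Jm n)ᵀ = -Jm n := by
  simp [Jm, fromBlocks_transpose, fromBlocks_neg, transpose_one]

lemma Jm_sq : Jm n * Jm n = -1 := by
  simp [Jm, fromBlocks_multiply, ← fromBlocks_one, fromBlocks_neg]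

lemma Jm_anti (u t : Fin n ⊕ Fin n) : Jm n u t = -Jm n t u := by
  have := congrFun (congrFun (Jm_t (n := n)) t) u
  simp only [Matrix.transpose_apply, Matrix.neg_apply] at this
  exact this

/-- the shift of the basic operator indexed by `u`. -/
def dz : Fin n ⊕ Fin n → (Fin n → ℤ) :=
  Sum.elim (fun i => -Pi.single i 1) (fun i => Pi.single i 1)

/-- the coefficient of the basic operator indexed by `u`. -/
def gz (a : Fin n → ℂ) : Fin n ⊕ Fin n → (Fin n → ℤ) → ℂ :=
  Sum.elim (fun i b => a i + (b i : ℂ)) (fun _ _ => 1)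

/-- the basic operators: `zop a (inl i)` is `∂ᵢ`, `zop a (inr i)` is `xᵢ`. -/
noncomputable def zop (a : Fin n → ℂ) (u : Fin n ⊕ Fin n) : Module.End ℂ (Vfull n) :=
  Wop (gz a u) (dz u)

lemma Wop_smul (c : ℂ) (g : (Fin n → ℤ) → ℂ) (d : Fin n → ℤ) :
    c • Wop g d = Wop (fun b => c * g b) d := by
  apply Finsupp.lhom_ext
  intro b e
  rw [LinearMap.smul_apply, Wop_single, Wop_single, smul_smul]
  congr 1; ring

lemma zop_comm (a : Fin n → ℂ) (u v : Fin n ⊕ Fin n) :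
    zop a u * zop a v = zop a v * zop a u + Jm n u v • 1 := by
  have key : ∀ (g g' : (Fin n → ℤ) → ℂ) (d d' : Fin n → ℤ) (c : ℂ), d = d' →
      (c ≠ 0 → d' = 0) → (∀ b, g b = g' b + c) →
      Wop g d = Wop g' d' + c • (1 : Module.End ℂ (Vfull n)) := by
    intro g g' d d' c hd hc hg
    rcases eq_or_ne c 0 with rfl | hc0
    · simp only [zero_smul, add_zero]
      exact Wop_congr _ _ _ _ (funext fun b => by rw [hg b, add_zero]) hd
    · rw [hc hc0] at hd ⊢
      rw [← Wop_one_zero, Wop_smul, ← Wop_add]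
      exact Wop_congr _ _ _ _ (funext fun b => by simpa using hg b) hd
  rcases u with i | i <;> rcases v with j | j <;>
    simp only [zop, gz, dz, Sum.elim_inl, Sum.elim_inr, Wop_comp, Jm, fromBlocks_apply₁₁,
      fromBlocks_apply₁₂, fromBlocks_apply₂₁, fromBlocks_apply₂₂, Matrix.zero_apply,
      Matrix.one_apply, Matrix.neg_apply, neg_smul]
  · apply key _ _ _ _ _ (by abel) (by simp) ?_
    intro b
    rcases eq_or_ne i j with rfl | hij
    · simp; try ring
    · simp [Pi.single_apply, hij, Ne.symm hij]; try ring
  · apply key _ _ _ _ _ (by abel) ?_ ?_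
    · intro hc
      have hij : i = j := by
        by_contra h; exact hc (by simp [h])
      subst hij; abel
    · intro b
      rcases eq_or_ne i j with rfl | hij
      · simp; try ring
      · simp [Pi.single_apply, hij, Ne.symm hij]; try ring
  · apply key _ _ _ _ _ (by abel) ?_ ?_
    · intro hc
      have hij : i = j := by
        by_contra h; exact hc (by simp [h])
      subst hij; abel
    · intro b
      rcases eq_or_ne i j with rfl | hij
      · simp; try ring
      · simp [Pi.single_apply, hij, Ne.symm hij]; try ring
  · apply key _ _ _ _ _ (by abel) (by simp) ?_
    intro b; simp


section generic
variable {V : Type*} [AddCommGroup V] [Module ℂ V]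

lemma quad_comm (A B C D : Module.End ℂ V) (p q r s : ℂ)
    (hBC : B * C = C * B + p • 1) (hBD : B * D = D * B + q • 1)
    (hAC : A * C = C * A + r • 1) (hAD : A * D = D * A + s • 1) :
    A * B * (C * D) = C * D * (A * B)
      + q • (A * C) + p • (A * D) + s • (C * B) + r • (D * B) := by
  have e1 : A * B * (C * D) = A * (B * C) * D := by noncomm_ring
  rw [e1, hBC]
  have e2 : A * (C * B + p • 1) * D = A * C * (B * D) + p • (A * D) := by
    simp only [mul_add, add_mul, mul_smul_comm, smul_mul_assoc, mul_one, one_mul]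
    noncomm_ring
  rw [e2, hBD]
  have e3 : A * C * (D * B + q • 1) = (A * C) * D * B + q • (A * C) := by
    simp only [mul_add, mul_smul_comm, mul_one]
    noncomm_ring
  rw [e3]
  have e4 : A * C * D * B = C * A * D * B + r • (D * B) := by
    rw [show A * C * D * B = (A * C) * (D * B) by noncomm_ring, hAC]
    simp only [add_mul, smul_mul_assoc, one_mul]
    noncomm_ring
  rw [e4]
  have e5 : C * A * D * B = C * D * A * B + s • (C * B) := by
    rw [show C * A * D * B = C * ((A * D) * B) by noncomm_ring, hAD]
    simp only [add_mul, mul_add, smul_mul_assoc, mul_smul_comm, one_mul]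
    noncomm_ring
  rw [e5]
  noncomm_ring

section sums
variable {M : Type*} [AddCommMonoid M] {ι : Type*} [Fintype ι]

lemma s12 (f : ι → ι → ι → ι → M) :
    ∑ a, ∑ b, ∑ c, ∑ d, f a b c d = ∑ b, ∑ a, ∑ c, ∑ d, f a b c d := Finset.sum_comm

lemma s23 (f : ι → ι → ι → ι → M) :
    ∑ a, ∑ b, ∑ c, ∑ d, f a b c d = ∑ a, ∑ c, ∑ b, ∑ d, f a b c d :=
  Finset.sum_congr rfl fun _ _ => Finset.sum_comm

lemma s34 (f : ι → ι → ι → ι → M) :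
    ∑ a, ∑ b, ∑ c, ∑ d, f a b c d = ∑ a, ∑ b, ∑ d, ∑ c, f a b c d :=
  Finset.sum_congr rfl fun _ _ => Finset.sum_congr rfl fun _ _ => Finset.sum_comm

lemma sum4_swap (f : ι → ι → ι → ι → M) :
    ∑ a, ∑ b, ∑ c, ∑ d, f a b c d = ∑ c, ∑ d, ∑ a, ∑ b, f a b c d := by
  rw [s12, s23, s12, s34, s23, s34]
end sums

variable {ι : Type*} [Fintype ι] (z : ι → Module.End ℂ V) (J : Matrix ι ι ℂ)

/-- the quadratic expression `(1/2) ∑ N u v z_u z_v`. -/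
noncomputable def QopG (N : Matrix ι ι ℂ) : Module.End ℂ V :=
  (2⁻¹ : ℂ) • ∑ u, ∑ v, N u v • (z u * z v)

lemma QopG_mul (S T : Matrix ι ι ℂ) :
    QopG z S * QopG z T = (4⁻¹ : ℂ) • ∑ u, ∑ v, ∑ w, ∑ t,
      (S u v * T w t) • (z u * z v * (z w * z t)) := by
  rw [QopG, QopG, smul_mul_assoc, mul_smul_comm, smul_smul]
  congr 1
  · norm_num
  rw [Finset.sum_mul]
  refine Finset.sum_congr rfl fun u _ => ?_
  rw [Finset.sum_mul]
  refine Finset.sum_congr rfl fun v _ => ?_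
  rw [smul_mul_assoc, Finset.mul_sum, Finset.smul_sum]
  refine Finset.sum_congr rfl fun w _ => ?_
  rw [Finset.mul_sum, Finset.smul_sum]
  refine Finset.sum_congr rfl fun t _ => ?_
  rw [mul_smul_comm, smul_smul]

lemma QopG_comm4 (hcomm : ∀ u v, z u * z v = z v * z u + J u v • 1) (u v w t : ι) :
    z u * z v * (z w * z t)
      = z w * z t * (z u * z v)
        + J v t • (z u * z w) + J v w • (z u * z t)
        + J u t • (z w * z v) + J u w • (z t * z v) :=
  quad_comm _ _ _ _ _ _ _ _ (hcomm v w) (hcomm v t) (hcomm u w) (hcomm u t)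

lemma QopG_bracket (hcomm : ∀ u v, z u * z v = z v * z u + J u v • 1)
    (hJ : ∀ u v, J u v = -J v u)
    {S T : Matrix ι ι ℂ} (hS : Sᵀ = S) (hT : Tᵀ = T) :
    QopG z S * QopG z T - QopG z T * QopG z S = QopG z (S * J * T - T * J * S) := by
  have hT' : ∀ p q, T p q = T q p := fun p q => congrFun (congrFun hT.symm p) q
  rw [QopG_mul, QopG_mul]
  have hswap : ∑ u, ∑ v, ∑ w, ∑ t, (T u v * S w t) • (z u * z v * (z w * z t))
      = ∑ u, ∑ v, ∑ w, ∑ t,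
          (S u v * T w t) • (z w * z t * (z u * z v)) := by
    rw [sum4_swap]
    refine Finset.sum_congr rfl fun u _ => Finset.sum_congr rfl fun v _ =>
      Finset.sum_congr rfl fun w _ => Finset.sum_congr rfl fun t _ => ?_
    rw [mul_comm]
  rw [hswap, ← smul_sub]
  simp only [← Finset.sum_sub_distrib, ← smul_sub]
  have comm4' : ∀ u v w t : ι,
      z u * z v * (z w * z t) - z w * z t * (z u * z v)
        = J v t • (z u * z w) + J v w • (z u * z t)
          + J u t • (z w * z v) + J u w • (z t * z v) := by
    intro u v w t
    rw [QopG_comm4 z J hcomm]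
    abel
  simp only [comm4', smul_add, smul_smul, Finset.sum_add_distrib]
  have h1 : ∑ u, ∑ v, ∑ w, ∑ t, (S u v * T w t * J v t) • (z u * z w)
      = ∑ u, ∑ w, (S * J * T) u w • (z u * z w) := by
    rw [s23]
    refine Finset.sum_congr rfl fun u _ => Finset.sum_congr rfl fun w _ => ?_
    simp only [← Finset.sum_smul]
    congr 1
    rw [Matrix.mul_apply, Finset.sum_comm]
    refine Finset.sum_congr rfl fun t _ => ?_
    rw [Matrix.mul_apply, Finset.sum_mul]
    refine Finset.sum_congr rfl fun v _ => ?_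
    rw [hT' w t]; ring
  have h2 : ∑ u, ∑ v, ∑ w, ∑ t, (S u v * T w t * J v w) • (z u * z t)
      = ∑ u, ∑ t, (S * J * T) u t • (z u * z t) := by
    rw [s34, s23]
    refine Finset.sum_congr rfl fun u _ => Finset.sum_congr rfl fun t _ => ?_
    simp only [← Finset.sum_smul]
    congr 1
    rw [Matrix.mul_apply, Finset.sum_comm]
    refine Finset.sum_congr rfl fun w _ => ?_
    rw [Matrix.mul_apply, Finset.sum_mul]
    refine Finset.sum_congr rfl fun v _ => ?_
    ring
  have h3 : ∑ u, ∑ v, ∑ w, ∑ t, (S u v * T w t * J u t) • (z w * z v)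
      = ∑ w, ∑ v, (-(T * J * S) w v) • (z w * z v) := by
    rw [s12, s23, s12]
    refine Finset.sum_congr rfl fun w _ => Finset.sum_congr rfl fun v _ => ?_
    simp only [← Finset.sum_smul]
    congr 1
    rw [Matrix.mul_apply, ← Finset.sum_neg_distrib]
    refine Finset.sum_congr rfl fun u _ => ?_
    rw [Matrix.mul_apply, Finset.sum_mul, ← Finset.sum_neg_distrib]
    refine Finset.sum_congr rfl fun t _ => ?_
    rw [hJ u t]; ring
  have h4 : ∑ u, ∑ v, ∑ w, ∑ t, (S u v * T w t * J u w) • (z t * z v)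
      = ∑ t, ∑ v, (-(T * J * S) t v) • (z t * z v) := by
    rw [s34, s23, s12, s23]
    refine Finset.sum_congr rfl fun t _ => Finset.sum_congr rfl fun v _ => ?_
    simp only [← Finset.sum_smul]
    congr 1
    rw [Matrix.mul_apply, ← Finset.sum_neg_distrib]
    refine Finset.sum_congr rfl fun u _ => ?_
    rw [Matrix.mul_apply, Finset.sum_mul, ← Finset.sum_neg_distrib]
    refine Finset.sum_congr rfl fun w _ => ?_
    rw [hJ u w, hT' w t]; ring
  rw [h1, h2, h3, h4, QopG]
  simp only [Matrix.sub_apply, sub_smul, Finset.sum_sub_distrib, Matrix.neg_apply, neg_smul,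
    Finset.sum_neg_distrib]
  module

end generic

noncomputable def WopB (g : Blat n → ℂ) (d : Blat n) : Module.End ℂ (Blat n →₀ ℂ) :=
  Finsupp.lsum ℂ (fun b => g b • Finsupp.lsingle (b + d))

lemma WopB_single (g : Blat n → ℂ) (d b : Blat n) (c : ℂ) :
    WopB g d (Finsupp.single b c) = (c * g b) • Finsupp.single (b + d) 1 := by
  simp [WopB, Finsupp.smul_single, mul_comm]

noncomputable def iB : (Blat n →₀ ℂ) →ₗ[ℂ] Vfull n :=
  Finsupp.lmapDomain ℂ ℂ (fun b => (b : Fin n → ℤ))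

lemma iB_single (b : Blat n) (c : ℂ) :
    iB (Finsupp.single b c) = Finsupp.single (b : Fin n → ℤ) c :=
  Finsupp.mapDomain_single

lemma iB_inj : Function.Injective (iB (n := n)) :=
  Finsupp.mapDomain_injective Subtype.val_injective

lemma WopB_intertwine (g : (Fin n → ℤ) → ℂ) (d : Blat n) :
    iB ∘ₗ WopB (fun b => g b.1) d = Wop g d.1 ∘ₗ iB := by
  apply Finsupp.lhom_ext
  intro b c
  show iB (WopB _ _ _) = Wop g d.1 (iB _)
  rw [WopB_single, _root_.map_smul, iB_single, iB_single, Wop_single]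
  simp

lemma zz_eq (a : Fin n → ℂ) (u v : Fin n ⊕ Fin n) :
    zop a u * zop a v = Wop (fun b => gz a v b * gz a u (b + dz v)) (dz u + dz v) := by
  rw [zop, zop, Wop_comp]

lemma dz_even (u v : Fin n ⊕ Fin n) : Even (∑ i, (dz u + dz v) i) := by
  rcases u with i | i <;> rcases v with j | j <;>
    simp [dz, Finset.sum_add_distrib, Finset.sum_pi_single'] <;> decide

/-- the pair shift as an element of `Blat n`. -/
def dzB (u v : Fin n ⊕ Fin n) : Blat n := ⟨dz u + dz v, dz_even u v⟩

/-- the quadratic operator `z_u z_v` on the small space. -/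
noncomputable def zzB (a : Fin n → ℂ) (u v : Fin n ⊕ Fin n) :
    Module.End ℂ (Blat n →₀ ℂ) :=
  WopB (fun b => gz a v b.1 * gz a u (b.1 + dz v)) (dzB u v)

lemma zzB_intertwine (a : Fin n → ℂ) (u v : Fin n ⊕ Fin n) :
    iB ∘ₗ zzB a u v = (zop a u * zop a v) ∘ₗ iB := by
  rw [zz_eq, zzB]
  apply Finsupp.lhom_ext
  intro b c
  show iB (WopB _ _ _) = Wop _ _ (iB _)
  rw [WopB_single, _root_.map_smul, iB_single, iB_single, Wop_single]
  simp [dzB]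

/-- the quadratic map on the small space. -/
noncomputable def QopB (a : Fin n → ℂ) (N : Matrix (Fin n ⊕ Fin n) (Fin n ⊕ Fin n) ℂ) :
    Module.End ℂ (Blat n →₀ ℂ) :=
  (2⁻¹ : ℂ) • ∑ u, ∑ v, N u v • zzB a u v

lemma QopB_intertwine (a : Fin n → ℂ) (N : Matrix (Fin n ⊕ Fin n) (Fin n ⊕ Fin n) ℂ) :
    iB ∘ₗ QopB a N = QopG (zop a) N ∘ₗ iB := by
  have key : ∀ u v (x : Blat n →₀ ℂ), iB (zzB a u v x) = (zop a u * zop a v) (iB x) :=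
    fun u v x => LinearMap.congr_fun (zzB_intertwine a u v) x
  apply LinearMap.ext
  intro f
  simp only [LinearMap.comp_apply, QopB, QopG, LinearMap.smul_apply, LinearMap.coe_sum,
    Finset.sum_apply, _root_.map_smul, map_sum, key]

lemma QopB_add (a : Fin n → ℂ) (N N' : Matrix (Fin n ⊕ Fin n) (Fin n ⊕ Fin n) ℂ) :
    QopB a (N + N') = QopB a N + QopB a N' := by
  simp only [QopB, Matrix.add_apply, add_smul, Finset.sum_add_distrib, smul_add]

lemma QopB_smul (a : Fin n → ℂ) (c : ℂ) (N : Matrix (Fin n ⊕ Fin n) (Fin n ⊕ Fin n) ℂ) :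
    QopB a (c • N) = c • QopB a N := by
  simp only [QopB, Matrix.smul_apply, smul_eq_mul, mul_smul, ← Finset.smul_sum]
  rw [smul_comm]

lemma J_eq : Matrix.J (Fin n) ℂ = -Jm n := by
  rw [Matrix.J, Jm]; simp [fromBlocks_neg]

lemma sp_sym {M : Matrix (Fin n ⊕ Fin n) (Fin n ⊕ Fin n) ℂ} (hM : M ∈ spC n) :
    (-(Jm n * M))ᵀ = -(Jm n * M) := by
  rw [show spC n = skewAdjointMatricesLieSubalgebra (Matrix.J (Fin n) ℂ) from rfl,
    mem_skewAdjointMatricesLieSubalgebra, mem_skewAdjointMatricesSubmodule] at hM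
  have h : Mᵀ * Matrix.J (Fin n) ℂ = Matrix.J (Fin n) ℂ * (-M) := hM
  rw [J_eq] at h
  rw [mul_neg, neg_mul_neg] at h
  have h2 : Mᵀ * Jm n = -(Jm n * M) := by rw [← h, neg_neg]
  rw [transpose_neg, transpose_mul, Jm_t, mul_neg, h2, neg_neg]

lemma Smul_bracket (M N : Matrix (Fin n ⊕ Fin n) (Fin n ⊕ Fin n) ℂ) :
    (-(Jm n * M)) * Jm n * (-(Jm n * N)) - (-(Jm n * N)) * Jm n * (-(Jm n * M))
      = -(Jm n * (M * N - N * M)) := by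
  have h : ∀ P Q : Matrix (Fin n ⊕ Fin n) (Fin n ⊕ Fin n) ℂ,
      (-(Jm n * P)) * Jm n * (-(Jm n * Q)) = -(Jm n * (P * Q)) := by
    intro P Q
    calc (-(Jm n * P)) * Jm n * (-(Jm n * Q)) = Jm n * P * (Jm n * Jm n) * Q := by
          noncomm_ring
      _ = -(Jm n * (P * Q)) := by rw [Jm_sq]; noncomm_ring
  rw [h, h]
  noncomm_ring

/-- the representation of `sp` on the small space. -/
noncomputable def rep (a : Fin n → ℂ) : spC n →ₗ⁅ℂ⁆ Module.End ℂ (Blat n →₀ ℂ) where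
  toFun M := QopB a (-(Jm n * M.1))
  map_add' M N := by
    change QopB a (-(Jm n * (M.1 + N.1))) = _
    rw [mul_add, neg_add, QopB_add]
  map_smul' c M := by
    change QopB a (-(Jm n * (c • M.1))) = c • QopB a (-(Jm n * M.1))
    rw [Matrix.mul_smul, ← smul_neg, QopB_smul]
  map_lie' := by
    intro x y
    have cancel : ∀ f g : Module.End ℂ (Blat n →₀ ℂ), iB ∘ₗ f = iB ∘ₗ g → f = g := by
      intro f g h
      apply LinearMap.ext
      intro v
      exact iB_inj (LinearMap.congr_fun h v)
    have Qi : ∀ N (x : Blat n →₀ ℂ), iB (QopB a N x) = QopG (zop a) N (iB x) :=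
      fun N x => LinearMap.congr_fun (QopB_intertwine a N) x
    apply cancel
    apply LinearMap.ext
    intro f
    have hbr : ((⁅x, y⁆ : spC n) : Matrix _ _ ℂ) = x.1 * y.1 - y.1 * x.1 := rfl
    simp only [LinearMap.comp_apply]
    rw [Qi]
    rw [hbr, ← Smul_bracket]
    rw [← LinearMap.congr_fun
      (QopG_bracket (zop a) (Jm n) (zop_comm a) Jm_anti (sp_sym x.2) (sp_sym y.2)) (iB f)]
    rw [Ring.lie_def]
    simp only [LinearMap.sub_apply, Module.End.mul_apply, map_sub, Qi]

lemma rep_single (a : Fin n → ℂ) (M : spC n) (b : Blat n) :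
    rep a M (Finsupp.single b 1) = (2⁻¹ : ℂ) • ∑ u, ∑ v, (-(Jm n * M.1)) u v •
      ((gz a v b.1 * gz a u (b.1 + dz v)) • Finsupp.single (b + dzB u v) 1) := by
  show QopB a _ _ = _
  simp only [QopB, LinearMap.smul_apply, LinearMap.coe_sum, Finset.sum_apply,
    LinearMap.sum_apply]
  congr 1
  refine Finset.sum_congr rfl fun u _ => Finset.sum_congr rfl fun v _ => ?_
  rw [zzB, WopB_single, one_mul]

section collapse
variable {W : Type*} [AddCommGroup W] [Module ℂ W]

lemma sum_fromBlocks_smul (P Q R S : Matrix (Fin n) (Fin n) ℂ)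
    (F : (Fin n ⊕ Fin n) → (Fin n ⊕ Fin n) → W) :
    ∑ u, ∑ v, fromBlocks P Q R S u v • F u v
      = (∑ i, ∑ j, P i j • F (.inl i) (.inl j)) + (∑ i, ∑ j, Q i j • F (.inl i) (.inr j))
        + (∑ i, ∑ j, R i j • F (.inr i) (.inl j))
        + (∑ i, ∑ j, S i j • F (.inr i) (.inr j)) := by
  rw [Fintype.sum_sum_type]
  simp only [Fintype.sum_sum_type, fromBlocks_apply₁₁, fromBlocks_apply₁₂, fromBlocks_apply₂₁,
    fromBlocks_apply₂₂, Finset.sum_add_distrib]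
  abel

lemma Egl_collapse (i j : Fin n) (F : Fin n → Fin n → W) :
    ∑ p, ∑ q, Egl i j p q • F p q = F i j := by
  simp [Egl, Matrix.single, ite_and, ite_smul, Finset.sum_ite_eq]

lemma zero_collapse (F : Fin n → Fin n → W) :
    ∑ p, ∑ q, (0 : Matrix (Fin n) (Fin n) ℂ) p q • F p q = 0 := by
  simp

lemma diag_collapse (c : Fin n → ℂ) (F : Fin n → Fin n → W) :
    ∑ p, ∑ q, diagonal c p q • F p q = ∑ p, c p • F p p := by
  simp [Matrix.diagonal_apply, ite_smul, Finset.sum_ite_eq]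
end collapse

lemma negJ_Xgl (A : Matrix (Fin n) (Fin n) ℂ) :
    -(Jm n * (Xgl A).1) = fromBlocks 0 Aᵀ A 0 := by
  show -(Jm n * fromBlocks A 0 0 (-Aᵀ)) = _
  simp [Jm, fromBlocks_multiply, fromBlocks_neg]

lemma negJ_Xep (i j : Fin n) :
    -(Jm n * (Xep i j).1) = fromBlocks 0 0 0 (Egl i j + Egl j i) := by
  show -(Jm n * fromBlocks 0 (Egl i j + Egl j i) 0 0) = _
  simp [Jm, fromBlocks_multiply, fromBlocks_neg]

lemma negJ_Xm (i j : Fin n) :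
    -(Jm n * (Xm i j).1) = fromBlocks (Egl i j + Egl j i) 0 0 0 := by
  show -(Jm n * fromBlocks 0 0 (-(Egl i j + Egl j i)) 0) = _
  simp [Jm, fromBlocks_multiply, fromBlocks_neg]

lemma dzB_DX (i j : Fin n) : dzB (Sum.inl j) (Sum.inr i) = dem i j :=
  Subtype.ext (by simp [dzB, dz, dem, sub_eq_add_neg, add_comm])

lemma dzB_XD (i j : Fin n) : dzB (Sum.inr i) (Sum.inl j) = dem i j :=
  Subtype.ext (by simp [dzB, dz, dem, sub_eq_add_neg])

lemma dzB_XX (i j : Fin n) : dzB (Sum.inr i) (Sum.inr j) = dep i j :=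
  Subtype.ext (by simp [dzB, dz, dep])

lemma dzB_DD (i j : Fin n) : dzB (Sum.inl i) (Sum.inl j) = -dep i j :=
  Subtype.ext (by simp [dzB, dz, dep]; abel)

lemma dep_comm (i j : Fin n) : dep j i = dep i j := Subtype.ext (add_comm _ _)

lemma rep_Xem (a : Fin n → ℂ) (i j : Fin n) (hij : i ≠ j) (b : Blat n) :
    rep a (Xem i j) (Finsupp.single b 1)
      = (a j + (b.1 j : ℂ)) • Finsupp.single (b + dem i j) 1 := by
  rw [rep_single, show (Xem i j : spC n) = Xgl (Egl i j) from rfl, negJ_Xgl, Egl_t,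
    sum_fromBlocks_smul, zero_collapse, zero_collapse, Egl_collapse, Egl_collapse]
  simp only [gz, dz, Sum.elim_inl, Sum.elim_inr, dzB_DX, dzB_XD, one_mul, mul_one,
    zero_add, add_zero, Pi.add_apply, Pi.single_apply, if_neg (Ne.symm hij),
    Int.cast_add, Int.cast_zero]
  rw [← two_smul ℂ, smul_smul]
  norm_num

lemma rep_Xep (a : Fin n → ℂ) (i j : Fin n) (b : Blat n) :
    rep a (Xep i j) (Finsupp.single b 1) = Finsupp.single (b + dep i j) 1 := by
  rw [rep_single, negJ_Xep, sum_fromBlocks_smul, zero_collapse, zero_collapse, zero_collapse]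
  simp only [Matrix.add_apply]
  simp only [add_smul, Finset.sum_add_distrib, Egl_collapse]
  simp only [gz, dz, Sum.elim_inl, Sum.elim_inr, dzB_XX, dep_comm, one_mul, mul_one,
    zero_add, add_zero, one_smul]
  rw [← two_smul ℂ, smul_smul]
  norm_num

lemma rep_Xm (a : Fin n → ℂ) (i j : Fin n) (hij : i ≠ j) (b : Blat n) :
    rep a (Xm i j) (Finsupp.single b 1)
      = ((a i + (b.1 i : ℂ)) * (a j + (b.1 j : ℂ))) • Finsupp.single (b - dep i j) 1 := by
  rw [rep_single, negJ_Xm, sum_fromBlocks_smul, zero_collapse, zero_collapse, zero_collapse]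
  simp only [Matrix.add_apply]
  simp only [add_smul, Finset.sum_add_distrib, Egl_collapse]
  have hdd : ∀ p q : Fin n, dzB (Sum.inl p) (Sum.inl q) = -dep p q := dzB_DD
  simp only [gz, dz, Sum.elim_inl, Sum.elim_inr, hdd, dep_comm, one_mul, mul_one,
    add_zero, zero_add, Pi.add_apply, Pi.neg_apply, Pi.single_apply,
    if_neg (Ne.symm hij), if_neg hij, Int.cast_add, Int.cast_neg, Int.cast_zero]
  have hsub : b + -dep i j = b - dep i j := (sub_eq_add_neg _ _).symm
  rw [hsub, ← add_smul, smul_smul]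
  congr 1
  push_cast
  ring

lemma rep_Xm_diag (a : Fin n → ℂ) (i : Fin n) (b : Blat n) :
    rep a (Xm i i) (Finsupp.single b 1)
      = ((a i + (b.1 i : ℂ)) * (a i + (b.1 i : ℂ) - 1)) •
          Finsupp.single (b - dep i i) 1 := by
  rw [rep_single, negJ_Xm, sum_fromBlocks_smul, zero_collapse, zero_collapse, zero_collapse]
  simp only [Matrix.add_apply]
  simp only [add_smul, Finset.sum_add_distrib, Egl_collapse]
  have hdd : ∀ p q : Fin n, dzB (Sum.inl p) (Sum.inl q) = -dep p q := dzB_DD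
  simp only [gz, dz, Sum.elim_inl, Sum.elim_inr, hdd, one_mul, mul_one,
    add_zero, zero_add, Pi.add_apply, Pi.neg_apply, Pi.single_eq_same,
    Int.cast_add, Int.cast_neg, Int.cast_one]
  have hsub : b + -dep i i = b - dep i i := (sub_eq_add_neg _ _).symm
  rw [hsub, ← add_smul, smul_smul]
  congr 1
  push_cast
  ring

lemma dem_self (i : Fin n) : dem i i = 0 := Subtype.ext (sub_self _)

lemma rep_Hem (a : Fin n → ℂ) (i j : Fin n) (b : Blat n) :
    rep a (Hem i j) (Finsupp.single b 1)
      = (a j + (b.1 j : ℂ) - a i - (b.1 i : ℂ)) • Finsupp.single b 1 := by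
  rw [rep_single, show (Hem i j : spC n) = Xgl (Egl j j - Egl i i) from rfl, negJ_Xgl,
    transpose_sub, Egl_t, Egl_t, sum_fromBlocks_smul, zero_collapse, zero_collapse]
  simp only [Matrix.sub_apply]
  simp only [sub_smul, Finset.sum_sub_distrib, Egl_collapse]
  simp only [gz, dz, Sum.elim_inl, Sum.elim_inr, dzB_DX, dzB_XD, dem_self, add_zero,
    one_mul, mul_one, zero_add, Pi.add_apply, Pi.single_eq_same, Int.cast_add, Int.cast_one]
  push_cast
  module

lemma rep_H2e1 [NeZero n] (a : Fin n → ℂ) (b : Blat n) :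
    rep a H2e1 (Finsupp.single b 1)
      = ((2 * a 0 + 2 * (b.1 0 : ℂ) + 1) / 2) • Finsupp.single b 1 := by
  rw [rep_single, show (H2e1 : spC n) = Xgl (Egl 0 0) from rfl, negJ_Xgl, Egl_t,
    sum_fromBlocks_smul, zero_collapse, zero_collapse, Egl_collapse, Egl_collapse]
  simp only [gz, dz, Sum.elim_inl, Sum.elim_inr, dzB_DX, dzB_XD, dem_self, add_zero,
    one_mul, mul_one, zero_add, Pi.add_apply, Pi.single_eq_same, Int.cast_add, Int.cast_one]
  rw [← add_smul, smul_smul]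
  congr 1
  push_cast
  ring

lemma rep_Hdiag (a c : Fin n → ℂ) (b : Blat n) :
    rep a (Hdiag c) (Finsupp.single b 1)
      = (∑ p, c p * (a p + (b.1 p : ℂ) + 2⁻¹)) • Finsupp.single b 1 := by
  rw [rep_single, show (Hdiag c : spC n) = Xgl (diagonal c) from rfl, negJ_Xgl,
    diagonal_transpose, sum_fromBlocks_smul, zero_collapse, zero_collapse, diag_collapse,
    diag_collapse]
  simp only [gz, dz, Sum.elim_inl, Sum.elim_inr, dzB_DX, dzB_XD, dem_self, add_zero,
    one_mul, mul_one, zero_add, Pi.add_apply, Pi.single_eq_same, Int.cast_add, Int.cast_one,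
    smul_smul]
  rw [← Finset.sum_add_distrib]
  simp only [← add_smul, ← Finset.sum_smul, smul_smul]
  congr 1
  rw [Finset.mul_sum]
  refine Finset.sum_congr rfl fun p _ => ?_
  push_cast
  ring

lemma rep_Hdiag_op (a c : Fin n → ℂ) :
    rep a (Hdiag c)
      = WopB (fun b => ∑ p, c p * (a p + (b.1 p : ℂ) + 2⁻¹)) (0 : Blat n) := by
  apply Finsupp.lhom_ext
  intro b e
  have h : (Finsupp.single b e : Blat n →₀ ℂ) = e • Finsupp.single b 1 := by
    simp [Finsupp.smul_single]
  rw [h, _root_.map_smul, _root_.map_smul, rep_Hdiag, WopB_single]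
  simp [smul_smul, mul_comm]

lemma WopB_zero_apply (g : Blat n → ℂ) (f : Blat n →₀ ℂ) (b : Blat n) :
    (WopB g 0) f b = g b * f b := by
  classical
  rw [WopB, Finsupp.lsum_apply]
  rw [Finsupp.sum_apply]
  rw [Finsupp.sum]
  simp only [LinearMap.smul_apply, Finsupp.lsingle_apply, Finsupp.smul_apply,
    Finsupp.single_apply, add_zero, smul_eq_mul, mul_ite, mul_one, mul_zero]
  rw [Finset.sum_ite_eq' f.support b (fun b' => g b' * f b')]
  split_ifs with hb
  · ring
  · rw [Finsupp.notMem_support_iff.mp hb, mul_zero]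

lemma mu_single (a : Fin n → ℂ) (b : Blat n) (i : Fin n) :
    ∑ p, (Pi.single i 1 : Fin n → ℂ) p * (a p + (b.1 p : ℂ) + 2⁻¹)
      = a i + (b.1 i : ℂ) + 2⁻¹ := by
  simp [Pi.single_apply, ite_mul, Finset.sum_ite_eq]

lemma weight_rank_le (a : Fin n → ℂ) (lam : (Fin n → ℂ) → ℂ) :
    Module.rank ℂ
      ↥(⨅ c : Fin n → ℂ, Module.End.eigenspace (rep a (Hdiag c)) (lam c)) ≤ 1 := by
  classical
  set μ : (Fin n → ℂ) → Blat n → ℂ :=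
    fun c b => ∑ p, c p * (a p + (b.1 p : ℂ) + 2⁻¹) with hμ
  set Sset : Set (Blat n) := {b | ∀ c, μ c b = lam c} with hSset
  set E := ⨅ c : Fin n → ℂ, Module.End.eigenspace (rep a (Hdiag c)) (lam c) with hE
  have hsupp : ∀ f ∈ E, ∀ b ∈ f.support, b ∈ Sset := by
    intro f hf b hb c
    have hfc : rep a (Hdiag c) f = lam c • f :=
      (Module.End.mem_eigenspace_iff).mp ((Submodule.mem_iInf _).mp hf c)
    have h1 : (rep a (Hdiag c) f) b = lam c * f b := by rw [hfc]; rfl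
    rw [rep_Hdiag_op, WopB_zero_apply] at h1
    exact mul_right_cancel₀ (Finsupp.mem_support_iff.mp hb) h1
  have hS : Sset.Subsingleton := by
    intro b1 h1 b2 h2
    refine Subtype.ext (funext fun i => ?_)
    have e1 := h1 (Pi.single i 1)
    have e2 := h2 (Pi.single i 1)
    rw [hμ] at e1 e2
    simp only at e1 e2
    rw [mu_single] at e1 e2
    have : ((b1.1 i : ℂ)) = (b2.1 i : ℂ) := by
      have h := e1.trans e2.symm
      linear_combination h
    exact_mod_cast this
  have hle : E ≤ Submodule.span ℂ
      ((fun b : Blat n => (Finsupp.single b 1 : Blat n →₀ ℂ)) '' Sset) := by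
    intro f hf
    rw [← Finsupp.sum_single f]
    apply Submodule.sum_mem
    intro b hb
    rw [← Finsupp.smul_single_one]
    exact Submodule.smul_mem _ _
      (Submodule.subset_span ⟨b, hsupp f hf b hb, rfl⟩)
  calc Module.rank ℂ E ≤ Module.rank ℂ
        ↥(Submodule.span ℂ ((fun b : Blat n => (Finsupp.single b 1 : Blat n →₀ ℂ)) '' Sset)) :=
        Submodule.rank_mono hle
    _ ≤ Cardinal.mk ((fun b : Blat n => (Finsupp.single b 1 : Blat n →₀ ℂ)) '' Sset) :=
        rank_span_le _
    _ ≤ 1 := Cardinal.mk_le_one_iff_set_subsingleton.mpr (hS.image _)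

/-- For every `a ∈ ℂⁿ`, the Britten–Lemire formulas define, on the vector
space `N(a)` with basis `{x^b : b ∈ B}` (here `B` is the set of integer vectors with even
coordinate sum), the structure of an `sp_{2n}(ℂ)`-module in which every weight space is at
most one-dimensional. -/
theorem stmt2 (n : ℕ) [NeZero n] (a : Fin n → ℂ) :
    ∃ π : spC n →ₗ⁅ℂ⁆ Module.End ℂ (Blat n →₀ ℂ),
      (∀ i j : Fin n, i ≠ j → ∀ b : Blat n,
        π (Xem i j) (Finsupp.single b 1)
          = (a j + (b.1 j : ℂ)) • Finsupp.single (b + dem i j) 1) ∧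
      (∀ (i j : Fin n) (b : Blat n),
        π (Xep i j) (Finsupp.single b 1) = Finsupp.single (b + dep i j) 1) ∧
      (∀ i j : Fin n, i ≠ j → ∀ b : Blat n,
        π (Xm i j) (Finsupp.single b 1)
          = ((a i + (b.1 i : ℂ)) * (a j + (b.1 j : ℂ))) • Finsupp.single (b - dep i j) 1) ∧
      (∀ (i : Fin n) (b : Blat n),
        π (Xm i i) (Finsupp.single b 1)
          = ((a i + (b.1 i : ℂ)) * (a i + (b.1 i : ℂ) - 1)) •
              Finsupp.single (b - dep i i) 1) ∧
      (∀ i j : Fin n, (j : ℕ) = (i : ℕ) + 1 → ∀ b : Blat n,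
        π (Hem i j) (Finsupp.single b 1)
          = (a j + (b.1 j : ℂ) - a i - (b.1 i : ℂ)) • Finsupp.single b 1) ∧
      (∀ b : Blat n,
        π H2e1 (Finsupp.single b 1)
          = ((2 * a 0 + 2 * (b.1 0 : ℂ) + 1) / 2) • Finsupp.single b 1) ∧
      -- every weight space (simultaneous eigenspace of the Cartan subalgebra) is at most
      -- one-dimensional :
      (∀ lam : (Fin n → ℂ) → ℂ,
        Module.rank ℂ
          ↥(⨅ c : Fin n → ℂ, Module.End.eigenspace (π (Hdiag c)) (lam c)) ≤ 1) :=
  ⟨rep a, fun i j hij b => rep_Xem a i j hij b, fun i j b => rep_Xep a i j b,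
    fun i j hij b => rep_Xm a i j hij b, fun i b => rep_Xm_diag a i b,
    fun i j _ b => rep_Hem a i j b, fun b => rep_H2e1 a b,
    fun lam => weight_rank_le a lam⟩
end

section
/- If a ∈ ℂ^n satisfies a_i ∉ ℤ for all i, then the sp_{2n}(ℂ)-module N(a) defined by the Britten–Lemire formulas is simple, and every root vector X_α for α a root of type C_n acts bijectively on N(a) (i.e., N(a) is cuspidal). -/
open Matrix

attribute [local instance] LieRing.ofAssociativeRing

variable {n : ℕ}

lemma addInt_ne {a : ℂ} (ha : a ∉ Set.range (Int.cast : ℤ → ℂ)) (m : ℤ) :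
    a + (m : ℂ) ≠ 0 := by
  intro h
  exact ha ⟨-m, by push_cast; linear_combination -h⟩

lemma single_eq_smul_one {α : Type*} [DecidableEq α] (b : α) (r : ℂ) :
    (Finsupp.single b r : α →₀ ℂ) = r • Finsupp.single b 1 := by
  rw [Finsupp.smul_single', mul_one]

/-- an operator acting on the basis by invertible scalars composed with a translation
is bijective. -/
lemma bij_of {n : ℕ} (c : Blat n → ℂ) (hc : ∀ b, c b ≠ 0) (d : Blat n)
    (f : Module.End ℂ (Blat n →₀ ℂ))
    (hf : ∀ b, f (Finsupp.single b 1) = c b • Finsupp.single (b + d) 1) :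
    Function.Bijective f := by
  set g : (Blat n →₀ ℂ) →ₗ[ℂ] (Blat n →₀ ℂ) :=
    Finsupp.lsum ℂ (fun b => (c (b - d))⁻¹ • Finsupp.lsingle (b - d)) with hg
  have hg1 : ∀ b : Blat n, g (Finsupp.single b 1)
      = (c (b - d))⁻¹ • Finsupp.single (b - d) 1 := by
    intro b; simp [hg]
  have key : ∀ (h : (Blat n →₀ ℂ) →ₗ[ℂ] (Blat n →₀ ℂ)),
      (∀ b, h (Finsupp.single b 1) = Finsupp.single b 1) → ∀ v, h v = v := by
    intro h hh v
    have : h = LinearMap.id := by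
      apply Finsupp.lhom_ext
      intro b r
      rw [single_eq_smul_one, _root_.map_smul, hh]
      simp
    rw [this]; rfl
  have hfg : ∀ b : Blat n, (f.comp g) (Finsupp.single b 1) = Finsupp.single b 1 := by
    intro b
    simp only [LinearMap.comp_apply, hg1, _root_.map_smul, hf, smul_smul,
      inv_mul_cancel₀ (hc _), one_smul, sub_add_cancel]
  have hgf : ∀ b : Blat n, (g.comp (f : (Blat n →₀ ℂ) →ₗ[ℂ] (Blat n →₀ ℂ)))
      (Finsupp.single b 1) = Finsupp.single b 1 := by
    intro b
    simp only [LinearMap.comp_apply, hf, _root_.map_smul, hg1, add_sub_cancel_right, smul_smul,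
      mul_inv_cancel₀ (hc _), one_smul]
  exact Function.bijective_iff_has_inverse.mpr
    ⟨g, fun v => key _ hgf v, fun v => key _ hfg v⟩

/-- coefficients of the image under a diagonal operator. -/
lemma diag_apply {n : ℕ} (f : Module.End ℂ (Blat n →₀ ℂ)) (lam : Blat n → ℂ)
    (hf : ∀ c, f (Finsupp.single c 1) = lam c • Finsupp.single c 1)
    (w : Blat n →₀ ℂ) (b : Blat n) : f w b = lam b * w b := by
  induction w using Finsupp.induction_linear with
  | zero => simp
  | add u v hu hv => simp [map_add, hu, hv, mul_add]
  | single c r =>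
    rw [single_eq_smul_one, _root_.map_smul, hf]
    by_cases h : c = b
    · subst h; simp [Finsupp.single_apply]; ring
    · simp [Finsupp.single_apply, h]

/-- If `a ∈ ℂⁿ` satisfies `aᵢ ∉ ℤ` for all `i`, then the
`sp_{2n}(ℂ)`-module `N(a)` defined by the Britten–Lemire formulas is simple, and every
root vector acts bijectively on it (i.e. `N(a)` is cuspidal). -/
theorem stmt3 (n : ℕ) [NeZero n] (a : Fin n → ℂ)
    (ha : ∀ i, a i ∉ Set.range (Int.cast : ℤ → ℂ))
    (π : spC n →ₗ⁅ℂ⁆ Module.End ℂ (Blat n →₀ ℂ))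
    (hXem : ∀ i j : Fin n, i ≠ j → ∀ b : Blat n,
      π (Xem i j) (Finsupp.single b 1)
        = (a j + (b.1 j : ℂ)) • Finsupp.single (b + dem i j) 1)
    (hXep : ∀ (i j : Fin n) (b : Blat n),
      π (Xep i j) (Finsupp.single b 1) = Finsupp.single (b + dep i j) 1)
    (hXm : ∀ i j : Fin n, i ≠ j → ∀ b : Blat n,
      π (Xm i j) (Finsupp.single b 1)
        = ((a i + (b.1 i : ℂ)) * (a j + (b.1 j : ℂ))) • Finsupp.single (b - dep i j) 1)
    (hXm2 : ∀ (i : Fin n) (b : Blat n),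
      π (Xm i i) (Finsupp.single b 1)
        = ((a i + (b.1 i : ℂ)) * (a i + (b.1 i : ℂ) - 1)) • Finsupp.single (b - dep i i) 1)
    (hHem : ∀ i j : Fin n, (j : ℕ) = (i : ℕ) + 1 → ∀ b : Blat n,
      π (Hem i j) (Finsupp.single b 1)
        = (a j + (b.1 j : ℂ) - a i - (b.1 i : ℂ)) • Finsupp.single b 1)
    (hH2 : ∀ b : Blat n,
      π H2e1 (Finsupp.single b 1)
        = ((2 * a 0 + 2 * (b.1 0 : ℂ) + 1) / 2) • Finsupp.single b 1) :
    -- `N(a)` is a simple module :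
    (∀ W : Submodule ℂ (Blat n →₀ ℂ),
      (∀ x : spC n, ∀ w ∈ W, π x w ∈ W) → W = ⊥ ∨ W = ⊤) ∧
    -- every root vector acts bijectively (cuspidality) :
    (∀ i j : Fin n, i ≠ j → Function.Bijective (π (Xem i j))) ∧
    (∀ i j : Fin n, Function.Bijective (π (Xep i j))) ∧
    (∀ i j : Fin n, Function.Bijective (π (Xm i j))) := by
  have hnz : ∀ (i : Fin n) (m : ℤ), a i + (m : ℂ) ≠ 0 := fun i m => addInt_ne (ha i) m
  have hnz1 : ∀ (i : Fin n) (m : ℤ), a i + (m : ℂ) - 1 ≠ 0 := by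
    intro i m h
    apply hnz i (m - 1)
    push_cast
    linear_combination h
  refine ⟨?_, ?_, ?_, ?_⟩
  · -- simplicity
    intro W hW
    by_cases hbot : W = ⊥
    · exact Or.inl hbot
    right
    -- step lemmas : moving singles around inside W
    have hstep_p : ∀ (i j : Fin n) (b : Blat n), Finsupp.single b 1 ∈ W →
        Finsupp.single (b + dep i j) 1 ∈ W := by
      intro i j b hb
      have := hW (Xep i j) _ hb
      rwa [hXep] at this
    have hstep_m : ∀ (i j : Fin n) (b : Blat n), Finsupp.single b 1 ∈ W →
        Finsupp.single (b - dep i j) 1 ∈ W := by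
      intro i j b hb
      by_cases hij : i = j
      · subst hij
        have h1 := hW (Xm i i) _ hb
        rw [hXm2] at h1
        have hc : (a i + (b.1 i : ℂ)) * (a i + (b.1 i : ℂ) - 1) ≠ 0 :=
          mul_ne_zero (hnz i _) (hnz1 i _)
        have h2 := W.smul_mem ((a i + (b.1 i : ℂ)) * (a i + (b.1 i : ℂ) - 1))⁻¹ h1
        rwa [smul_smul, inv_mul_cancel₀ hc, one_smul] at h2
      · have h1 := hW (Xm i j) _ hb
        rw [hXm i j hij] at h1
        have hc : (a i + (b.1 i : ℂ)) * (a j + (b.1 j : ℂ)) ≠ 0 :=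
          mul_ne_zero (hnz i _) (hnz j _)
        have h2 := W.smul_mem ((a i + (b.1 i : ℂ)) * (a j + (b.1 j : ℂ)))⁻¹ h1
        rwa [smul_smul, inv_mul_cancel₀ hc, one_smul] at h2
    have claimA : ∀ (z : ℤ) (i j : Fin n) (b : Blat n), Finsupp.single b 1 ∈ W →
        Finsupp.single (b + z • dep i j) 1 ∈ W := by
      intro z i j
      induction z using Int.induction_on with
      | zero => intro b hb; simpa using hb
      | succ k ih =>
        intro b hb
        have : b + ((k : ℤ) + 1) • dep i j = (b + (k : ℤ) • dep i j) + dep i j := by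
          rw [add_smul, one_smul, add_assoc]
        rw [this]
        exact hstep_p _ _ _ (ih b hb)
      | pred k ih =>
        intro b hb
        have : b + (-(k : ℤ) - 1) • dep i j = (b + (-(k : ℤ)) • dep i j) - dep i j := by
          rw [sub_smul, one_smul, sub_eq_add_neg, ← add_assoc, ← sub_eq_add_neg]
        rw [this]
        exact hstep_m _ _ _ (ih b hb)
    have claimB : ∀ (c : Fin n → ℤ) (s : Finset (Fin n)) (b : Blat n),
        Finsupp.single b 1 ∈ W → Finsupp.single (b + ∑ i ∈ s, c i • dep i 0) 1 ∈ W := by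
      intro c s
      induction s using Finset.induction_on with
      | empty => intro b hb; simpa using hb
      | insert x s' hx ih =>
        intro b hb
        rw [Finset.sum_insert hx]
        have : b + (c x • dep x 0 + ∑ i ∈ s', c i • dep i 0)
            = (b + ∑ i ∈ s', c i • dep i 0) + c x • dep x 0 := by abel
        rw [this]
        exact claimA _ _ _ _ (ih b hb)
    -- any single reaches any other single
    have hall : ∀ b0 : Blat n, Finsupp.single b0 1 ∈ W →
        ∀ b : Blat n, Finsupp.single b 1 ∈ W := by
      intro b0 hb0 b
      set d : Blat n := b - b0 with hd
      obtain ⟨t, ht⟩ := d.2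
      have hdecomp : b = (b0 + ∑ i, d.1 i • dep i 0) + (-t) • dep 0 0 := by
        apply Subtype.ext
        have hco : ((∑ i, d.1 i • dep i 0 : Blat n) : Fin n → ℤ)
            = ∑ i, d.1 i • ((dep i 0 : Blat n) : Fin n → ℤ) := by
          rw [AddSubmonoidClass.coe_finset_sum]
          congr 1
        funext k
        have h1 : (((b0 + ∑ i, d.1 i • dep i 0) + (-t) • dep 0 0 : Blat n) : Fin n → ℤ) k
            = b0.1 k + (∑ i, d.1 i • ((dep i 0 : Blat n) : Fin n → ℤ)) k
              + (-t) • ((dep 0 0 : Blat n) : Fin n → ℤ) k := by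
          simp [hco]
        rw [h1]
        have h2 : (∑ i, d.1 i • ((dep i 0 : Blat n) : Fin n → ℤ)) k
            = ∑ i, d.1 i * ((Pi.single i 1 : Fin n → ℤ) k + (Pi.single 0 1 : Fin n → ℤ) k) := by
          rw [Finset.sum_apply]
          congr 1
        rw [h2]
        have h3 : ∀ i : Fin n, (Pi.single i 1 : Fin n → ℤ) k = if k = i then 1 else 0 :=
          fun i => Pi.single_apply _ _ _
        have h4 : ((dep 0 0 : Blat n) : Fin n → ℤ) k
            = (if k = 0 then 1 else 0) + (if k = 0 then 1 else 0) := by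
          show (Pi.single 0 1 : Fin n → ℤ) k + (Pi.single 0 1 : Fin n → ℤ) k = _
          rw [h3]
        simp only [h3, h4, mul_add, Finset.sum_add_distrib, mul_ite, mul_one, mul_zero]
        rw [Finset.sum_ite_eq Finset.univ k d.1]
        have hdk : d.1 k = b.1 k - b0.1 k := rfl
        have hsum : ∑ i, d.1 i = t + t := ht
        by_cases hk : k = 0
        · subst hk
          simp [hdk, hsum, smul_eq_mul]
          try ring
        · simp [hk, hdk, smul_eq_mul]
          try ring
      rw [hdecomp]
      exact claimA _ _ _ _ (claimB _ _ _ hb0)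
    -- separation of basis vectors by diagonal operators
    have hsep : ∀ b b' : Blat n, b ≠ b' → ∃ (H : spC n) (lam : Blat n → ℂ),
        (∀ c, π H (Finsupp.single c 1) = lam c • Finsupp.single c 1) ∧ lam b ≠ lam b' := by
      intro b b' hbb
      classical
      have hex : ∃ k : ℕ, ∃ hk : k < n, b.1 ⟨k, hk⟩ ≠ b'.1 ⟨k, hk⟩ := by
        by_contra h
        push_neg at h
        exact hbb (Subtype.ext (funext fun i => h i.1 i.2))
      obtain ⟨k, hk, hne, hmin⟩ : ∃ (k : ℕ) (hk : k < n), b.1 ⟨k, hk⟩ ≠ b'.1 ⟨k, hk⟩ ∧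
          ∀ m, m < k → ∀ hm : m < n, b.1 ⟨m, hm⟩ = b'.1 ⟨m, hm⟩ := by
        obtain ⟨hk, hne⟩ := Nat.find_spec hex
        refine ⟨Nat.find hex, hk, hne, ?_⟩
        intro m hm hmn
        have h2 := Nat.find_min hex hm
        push_neg at h2
        exact h2 hmn
      rcases k with _ | m
      · refine ⟨H2e1, fun c => (2 * a 0 + 2 * (c.1 0 : ℂ) + 1) / 2, hH2, ?_⟩
        intro heq
        apply hne
        have heq' : (2 * a 0 + 2 * ((b.1 0 : ℤ) : ℂ) + 1) / 2
            = (2 * a 0 + 2 * ((b'.1 0 : ℤ) : ℂ) + 1) / 2 := heq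
        have h0 : (⟨0, hk⟩ : Fin n) = 0 := by
          apply Fin.ext
          simp
        rw [h0]
        have hc : ((b.1 0 : ℤ) : ℂ) = ((b'.1 0 : ℤ) : ℂ) := by linear_combination heq'
        exact_mod_cast hc
      · have hmn : m < n := by omega
        set i : Fin n := ⟨m + 1, hk⟩ with hi
        set j : Fin n := ⟨m, hmn⟩ with hj
        have hij : (i : ℕ) = (j : ℕ) + 1 := rfl
        have hjeq : ((b.1 j : ℤ) : ℂ) = ((b'.1 j : ℤ) : ℂ) := by
          exact_mod_cast congrArg (fun z : ℤ => (z : ℂ)) (hmin m (Nat.lt_succ_self m) hmn)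
        refine ⟨Hem j i, fun c => a i + ((c.1 i : ℤ) : ℂ) - a j - ((c.1 j : ℤ) : ℂ),
          hHem j i hij, ?_⟩
        intro heq
        apply hne
        have heq' : a i + ((b.1 i : ℤ) : ℂ) - a j - ((b.1 j : ℤ) : ℂ)
            = a i + ((b'.1 i : ℤ) : ℂ) - a j - ((b'.1 j : ℤ) : ℂ) := heq
        have hc : ((b.1 i : ℤ) : ℂ) = ((b'.1 i : ℤ) : ℂ) := by
          linear_combination heq' + hjeq
        exact_mod_cast hc
    -- a nonzero invariant submodule contains a basis vector
    have key : ∀ m : ℕ, ∀ w : Blat n →₀ ℂ, w ∈ W → w ≠ 0 → w.support.card ≤ m →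
        ∃ b : Blat n, Finsupp.single b 1 ∈ W := by
      intro m
      induction m with
      | zero =>
        intro w _ hw0 hcard
        exact absurd (Finsupp.card_support_eq_zero.mp (Nat.le_zero.mp hcard)) hw0
      | succ m ih =>
        intro w hwW hw0 hcard
        by_cases hone : w.support.card = 1
        · obtain ⟨b, hb⟩ := Finset.card_eq_one.mp hone
          refine ⟨b, ?_⟩
          have hwb : w b ≠ 0 := by
            have : b ∈ w.support := by rw [hb]; exact Finset.mem_singleton_self b
            exact Finsupp.mem_support_iff.mp this
          have hweq : w = Finsupp.single b (w b) := by
            ext c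
            by_cases hc : c = b
            · subst hc; simp
            · have : c ∉ w.support := by rw [hb]; simp [hc]
              rw [Finsupp.notMem_support_iff] at this
              simp [this, Finsupp.single_apply, Ne.symm hc]
          obtain ⟨r, hr0, hrw⟩ : ∃ r : ℂ, r ≠ 0 ∧ w = Finsupp.single b r := ⟨w b, hwb, hweq⟩
          have h5 := W.smul_mem r⁻¹ hwW
          rw [hrw, Finsupp.smul_single', inv_mul_cancel₀ hr0] at h5
          exact h5
        · have htwo : 1 < w.support.card := by
            rcases Nat.lt_or_ge w.support.card 1 with h | h
            · exact absurd (Finsupp.card_support_eq_zero.mp (by omega)) hw0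
            · omega
          obtain ⟨b, hbs, b', hbs', hbb⟩ := Finset.one_lt_card.mp htwo
          obtain ⟨H, lam, hdiag, hlam⟩ := hsep b b' hbb
          set w' : Blat n →₀ ℂ := π H w - lam b' • w with hw'
          have hw'W : w' ∈ W := W.sub_mem (hW H w hwW) (W.smul_mem _ hwW)
          have hw'app : ∀ c, w' c = (lam c - lam b') * w c := by
            intro c
            rw [hw']
            simp [diag_apply (π H) lam hdiag w c]
            ring
          have hw'b : w' b ≠ 0 := by
            rw [hw'app]
            exact mul_ne_zero (sub_ne_zero.mpr hlam) (Finsupp.mem_support_iff.mp hbs)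
          have hw'0 : w' ≠ 0 := fun h => hw'b (by rw [h]; rfl)
          have hsub : w'.support ⊆ w.support.erase b' := by
            intro c hc
            rw [Finsupp.mem_support_iff, hw'app] at hc
            rw [Finset.mem_erase]
            constructor
            · intro hcb'
              subst hcb'
              simp at hc
            · rw [Finsupp.mem_support_iff]
              intro h
              exact hc (by rw [h, mul_zero])
          have hcard' : w'.support.card ≤ m := by
            have h1 := Finset.card_le_card hsub
            rw [Finset.card_erase_of_mem hbs'] at h1
            omega
          exact ih w' hw'W hw'0 hcard'
    obtain ⟨w, hwW, hw0⟩ := Submodule.ne_bot_iff W |>.mp hbot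
    obtain ⟨b0, hb0⟩ := key w.support.card w hwW hw0 le_rfl
    have hallW := hall b0 hb0
    suffices h : ∀ v : Blat n →₀ ℂ, v ∈ W by
      rw [eq_top_iff]; exact fun v _ => h v
    intro v
    induction v using Finsupp.induction_linear with
    | zero => exact W.zero_mem
    | add u v hu hv => exact W.add_mem hu hv
    | single b r =>
      rw [single_eq_smul_one]
      exact W.smul_mem r (hallW b)
  · -- Xem bijective
    intro i j hij
    exact bij_of (fun b => a j + (b.1 j : ℂ)) (fun b => hnz j _) (dem i j) _ (hXem i j hij)
  · -- Xep bijective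
    intro i j
    refine bij_of (fun _ => 1) (fun _ => one_ne_zero) (dep i j) _ ?_
    intro b
    rw [hXep, one_smul]
  · -- Xm bijective
    intro i j
    by_cases hij : i = j
    · subst hij
      refine bij_of (fun b => (a i + (b.1 i : ℂ)) * (a i + (b.1 i : ℂ) - 1))
        (fun b => mul_ne_zero (hnz i _) (hnz1 i _)) (-(dep i i)) _ ?_
      intro b
      rw [hXm2, ← sub_eq_add_neg]
    · refine bij_of (fun b => (a i + (b.1 i : ℂ)) * (a j + (b.1 j : ℂ)))
        (fun b => mul_ne_zero (hnz i _) (hnz j _)) (-(dep i j)) _ ?_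
      intro b
      rw [hXm i j hij, ← sub_eq_add_neg]
end

section
/- Let V be a finite-dimensional ℂ-vector space and P, Q commuting linear operators on V. Then the formulas e·v = (P - i·Id)v ∈ V^{(i+1)}, f·v = (Q + i·Id)v ∈ V^{(i-1)}, h·v = (Q - P + 2i·Id)v ∈ V^{(i)} for v ∈ V^{(i)} define on the vector space V̄ = ⊕_{i∈ℤ} V^{(i)} (each V^{(i)} a copy of V) the structure of an sl_2(ℂ)-module. -/
open LieAlgebra.SpecialLinear

attribute [local instance 100] LieRing.ofAssociativeRing

/-- the standard basis element `e` of `sl₂(ℂ)`. -/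
noncomputable def sl2E : sl (Fin 2) ℂ := single 0 1 (by decide) 1

/-- the standard basis element `f` of `sl₂(ℂ)`. -/
noncomputable def sl2F : sl (Fin 2) ℂ := single 1 0 (by decide) 1

/-- the standard basis element `h` of `sl₂(ℂ)`. -/
noncomputable def sl2H : sl (Fin 2) ℂ :=
  ⟨Matrix.single 0 0 1 - Matrix.single 1 1 1, by
    show _ ∈ LinearMap.ker (Matrix.traceLinearMap (Fin 2) ℂ ℂ)
    rw [LinearMap.mem_ker]
    simp [Matrix.trace, Matrix.diag, Matrix.single, Fin.sum_univ_two]⟩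

section aux
variable {V : Type*} [AddCommGroup V] [Module ℂ V] (P Q : Module.End ℂ V)

noncomputable def opE : Module.End ℂ (ℤ →₀ V) :=
  Finsupp.lsum ℂ fun i => (Finsupp.lsingle (i+1) : V →ₗ[ℂ] ℤ →₀ V) ∘ₗ (P - (i:ℂ) • 1)
noncomputable def opF : Module.End ℂ (ℤ →₀ V) :=
  Finsupp.lsum ℂ fun i => (Finsupp.lsingle (i-1) : V →ₗ[ℂ] ℤ →₀ V) ∘ₗ (Q + (i:ℂ) • 1)
noncomputable def opH : Module.End ℂ (ℤ →₀ V) :=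
  Finsupp.lsum ℂ fun i => (Finsupp.lsingle i : V →ₗ[ℂ] ℤ →₀ V) ∘ₗ (Q - P + ((2*i:ℤ):ℂ) • 1)

lemma opE_single (i : ℤ) (v : V) :
    opE P (Finsupp.single i v) = Finsupp.single (i+1) ((P - (i:ℂ) • 1) v) := by simp [opE]
lemma opF_single (i : ℤ) (v : V) :
    opF Q (Finsupp.single i v) = Finsupp.single (i-1) ((Q + (i:ℂ) • 1) v) := by simp [opF]
lemma opH_single (i : ℤ) (v : V) :
    opH P Q (Finsupp.single i v) = Finsupp.single i ((Q - P + ((2*i:ℤ):ℂ) • 1) v) := by simp [opH]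

variable {P Q}

lemma keyHE (hPQ : Commute P Q) (i : ℤ) :
    (Q - P + ((2*(i+1):ℤ):ℂ) • (1 : Module.End ℂ V)) * (P - (i:ℂ) • 1)
      - (P - (i:ℂ) • 1) * (Q - P + ((2*i:ℤ):ℂ) • 1) = (2:ℂ) • (P - (i:ℂ) • 1) := by
  have h := hPQ.eq
  have hc1 := (Algebra.commutes ((i:ℂ)) P).symm
  have hc2 := (Algebra.commutes ((i:ℂ)) Q).symm
  simp only [Algebra.smul_def (A := Module.End ℂ V), mul_one]
  push_cast
  simp only [map_add, map_mul, map_ofNat, map_one]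
  linear_combination (norm := noncomm_ring) -h - hc2 - hc1

lemma keyHF (hPQ : Commute P Q) (i : ℤ) :
    (Q - P + ((2*(i-1):ℤ):ℂ) • (1 : Module.End ℂ V)) * (Q + (i:ℂ) • 1)
      - (Q + (i:ℂ) • 1) * (Q - P + ((2*i:ℤ):ℂ) • 1) = (-2:ℂ) • (Q + (i:ℂ) • 1) := by
  have h := hPQ.eq
  have hc1 := (Algebra.commutes ((i:ℂ)) P).symm
  have hc2 := (Algebra.commutes ((i:ℂ)) Q).symm
  simp only [Algebra.smul_def (A := Module.End ℂ V), mul_one]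
  push_cast
  simp only [map_add, map_mul, map_sub, map_ofNat, map_one, map_neg]
  linear_combination (norm := noncomm_ring) -h - hc1 - hc2

lemma keyEF (hPQ : Commute P Q) (i : ℤ) :
    (P - ((i-1:ℤ):ℂ) • (1 : Module.End ℂ V)) * (Q + (i:ℂ) • 1)
      - (Q + ((i+1:ℤ):ℂ) • 1) * (P - (i:ℂ) • 1) = Q - P + ((2*i:ℤ):ℂ) • 1 := by
  have h := hPQ.eq
  have hc1 := (Algebra.commutes ((i:ℂ)) P).symm
  have hc2 := (Algebra.commutes ((i:ℂ)) Q).symm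
  simp only [Algebra.smul_def (A := Module.End ℂ V), mul_one]
  push_cast
  simp only [map_add, map_mul, map_sub, map_ofNat, map_one]
  linear_combination (norm := noncomm_ring) h + hc1 + hc2

lemma bracketHE (hPQ : Commute P Q) : ⁅opH P Q, opE P⁆ = (2:ℂ) • opE P := by
  rw [Ring.lie_def]
  apply Finsupp.lhom_ext
  intro i v
  rw [LinearMap.sub_apply, Module.End.mul_apply, Module.End.mul_apply, opE_single,
    opH_single, opH_single, opE_single, LinearMap.smul_apply, opE_single,
    Finsupp.smul_single, ← Finsupp.single_sub]
  congr 1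
  have := DFunLike.congr_fun (keyHE hPQ i) v
  simpa using this

lemma bracketHF (hPQ : Commute P Q) : ⁅opH P Q, opF Q⁆ = (-2:ℂ) • opF Q := by
  rw [Ring.lie_def]
  apply Finsupp.lhom_ext
  intro i v
  rw [LinearMap.sub_apply, Module.End.mul_apply, Module.End.mul_apply, opF_single,
    opH_single, opH_single, opF_single, LinearMap.smul_apply, opF_single,
    Finsupp.smul_single, ← Finsupp.single_sub]
  congr 1
  have := DFunLike.congr_fun (keyHF hPQ i) v
  simpa using this

lemma bracketEF (hPQ : Commute P Q) : ⁅opE P, opF Q⁆ = opH P Q := by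
  rw [Ring.lie_def]
  apply Finsupp.lhom_ext
  intro i v
  rw [LinearMap.sub_apply, Module.End.mul_apply, Module.End.mul_apply, opF_single,
    opE_single, opE_single, opF_single, opH_single]
  rw [show i - 1 + 1 = i from by ring, show i + 1 - 1 = i from by ring, ← Finsupp.single_sub]
  congr 1
  have := DFunLike.congr_fun (keyEF hPQ i) v
  simpa using this

lemma bracketEH (hPQ : Commute P Q) : ⁅opE P, opH P Q⁆ = (-2:ℂ) • opE P := by
  rw [← lie_skew, bracketHE hPQ]; module

lemma bracketFH (hPQ : Commute P Q) : ⁅opF Q, opH P Q⁆ = (2:ℂ) • opF Q := by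
  rw [← lie_skew, bracketHF hPQ]; module

lemma bracketFE (hPQ : Commute P Q) : ⁅opF Q, opE P⁆ = -opH P Q := by
  rw [← lie_skew, bracketEF hPQ]

lemma mySmulLie {M : Type*} [AddCommGroup M] [Module ℂ M] (c : ℂ) (x y : Module.End ℂ M) :
    ⁅c • x, y⁆ = c • ⁅x, y⁆ := smul_lie c x y

lemma myLieSmul {M : Type*} [AddCommGroup M] [Module ℂ M] (c : ℂ) (x y : Module.End ℂ M) :
    ⁅x, c • y⁆ = c • ⁅x, y⁆ := lie_smul c x y

lemma myLieSelf {M : Type*} [AddCommGroup M] [Module ℂ M] (x : Module.End ℂ M) :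
    ⁅x, x⁆ = 0 := lie_self x

variable (P Q)

noncomputable def piLin : sl (Fin 2) ℂ →ₗ[ℂ] Module.End ℂ (ℤ →₀ V) where
  toFun A := A.val 0 0 • opH P Q + A.val 0 1 • opE P + A.val 1 0 • opF Q
  map_add' A B := by
    show ((A.val + B.val) 0 0) • _ + ((A.val + B.val) 0 1) • _ + ((A.val + B.val) 1 0) • _ = _
    simp only [Matrix.add_apply, add_smul]
    abel
  map_smul' c A := by
    show ((c • A.val) 0 0) • _ + ((c • A.val) 0 1) • _ + ((c • A.val) 1 0) • _ = _
    simp only [Matrix.smul_apply, smul_eq_mul, mul_smul, RingHom.id_apply, smul_add]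

lemma trace_entry (A : sl (Fin 2) ℂ) : A.val 1 1 = -A.val 0 0 := by
  have h : Matrix.trace A.val = 0 := A.2
  rw [Matrix.trace_fin_two] at h
  linear_combination h

variable {P Q}

noncomputable def piHom (hPQ : Commute P Q) :
    sl (Fin 2) ℂ →ₗ⁅ℂ⁆ Module.End ℂ (ℤ →₀ V) :=
  { piLin P Q with
    map_lie' := by
      intro A B
      show ((⁅A,B⁆ : sl (Fin 2) ℂ).val 0 0) • opH P Q + (⁅A,B⁆ : sl (Fin 2) ℂ).val 0 1 • opE P
          + (⁅A,B⁆ : sl (Fin 2) ℂ).val 1 0 • opF Q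
        = ⁅A.val 0 0 • opH P Q + A.val 0 1 • opE P + A.val 1 0 • opF Q,
           B.val 0 0 • opH P Q + B.val 0 1 • opE P + B.val 1 0 • opF Q⁆
      have hcoe : (⁅A,B⁆ : sl (Fin 2) ℂ).val = A.val * B.val - B.val * A.val := rfl
      simp only [hcoe, Matrix.sub_apply, Matrix.mul_apply, Fin.sum_univ_two,
        trace_entry, add_lie, lie_add, mySmulLie, myLieSmul, myLieSelf, smul_zero,
        zero_add, add_zero, bracketHE hPQ, bracketHF hPQ, bracketEF hPQ,
        bracketEH hPQ, bracketFH hPQ, bracketFE hPQ]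
      module }

end aux

/-- Given commuting operators `P`, `Q` on a finite-dimensional complex
vector space `V`, the formulas `e·v = (P - i)v ∈ V⁽ⁱ⁺¹⁾`, `f·v = (Q + i)v ∈ V⁽ⁱ⁻¹⁾`,
`h·v = (Q - P + 2i)v ∈ V⁽ⁱ⁾` (for `v ∈ V⁽ⁱ⁾`) define on `⊕_{i ∈ ℤ} V⁽ⁱ⁾` the structure of
an `sl₂(ℂ)`-module. -/
theorem stmt4 (V : Type*) [AddCommGroup V] [Module ℂ V] [FiniteDimensional ℂ V]
    (P Q : Module.End ℂ V) (hPQ : Commute P Q) :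
    ∃ π : sl (Fin 2) ℂ →ₗ⁅ℂ⁆ Module.End ℂ (ℤ →₀ V),
      (∀ (i : ℤ) (v : V),
        π sl2E (Finsupp.single i v) = Finsupp.single (i + 1) ((P - (i : ℂ) • 1) v)) ∧
      (∀ (i : ℤ) (v : V),
        π sl2F (Finsupp.single i v) = Finsupp.single (i - 1) ((Q + (i : ℂ) • 1) v)) ∧
      (∀ (i : ℤ) (v : V),
        π sl2H (Finsupp.single i v) = Finsupp.single i ((Q - P + (2 * i : ℂ) • 1) v)) := by
  refine ⟨piHom hPQ, ?_, ?_, ?_⟩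
  · intro i v
    have hE : piHom hPQ sl2E = opE P := by
      show (sl2E.val 0 0) • opH P Q + (sl2E.val 0 1) • opE P + (sl2E.val 1 0) • opF Q = opE P
      simp [sl2E, val_single, Matrix.single]
    rw [hE, opE_single]
  · intro i v
    have hF : piHom hPQ sl2F = opF Q := by
      show (sl2F.val 0 0) • opH P Q + (sl2F.val 0 1) • opE P + (sl2F.val 1 0) • opF Q = opF Q
      simp [sl2F, val_single, Matrix.single]
    rw [hF, opF_single]
  · intro i v
    have hH : piHom hPQ sl2H = opH P Q := by
      show (sl2H.val 0 0) • opH P Q + (sl2H.val 0 1) • opE P + (sl2H.val 1 0) • opF Q = opH P Q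
      simp [sl2H, Matrix.single]
    rw [hH, opH_single]
    norm_cast
end

section
/- With V, T_1,…,T_n commuting nilpotent operators and a_i ∉ ℤ for all i, each summand V^b of the sp_{2n}-module FV is exactly one generalized weight space of FV, and for b ≠ b' the generalized weights of V^b and V^{b'} are distinct. -/
open Matrix

attribute [local instance 100] LieRing.ofAssociativeRing

variable {n : ℕ}

section Aux

lemma Xgl_add (A B : Matrix (Fin n) (Fin n) ℂ) : Xgl (A + B) = Xgl A + Xgl B := by
  apply Subtype.ext
  show fromBlocks (A + B) 0 0 (-(A + B)ᵀ)
      = fromBlocks A 0 0 (-Aᵀ) + fromBlocks B 0 0 (-Bᵀ)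
  rw [Matrix.fromBlocks_add]
  congr 1 <;> simp [transpose_add] <;> abel

lemma Xgl_smul (c : ℂ) (A : Matrix (Fin n) (Fin n) ℂ) : Xgl (c • A) = c • Xgl A := by
  apply Subtype.ext
  show fromBlocks (c • A) 0 0 (-(c • A)ᵀ) = c • fromBlocks A 0 0 (-Aᵀ)
  rw [Matrix.fromBlocks_smul]
  congr 1 <;> simp

noncomputable def XglL : Matrix (Fin n) (Fin n) ℂ →ₗ[ℂ] spC n where
  toFun := Xgl
  map_add' := Xgl_add
  map_smul' := Xgl_smul

lemma Hdiag_eq_sum (c : Fin n → ℂ) : Hdiag c = ∑ i, c i • Xgl (Egl i i) := by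
  have hdiag : diagonal c = ∑ i, c i • Egl i i := by
    ext i j
    simp [Matrix.sum_apply, Matrix.diagonal_apply, Egl, Matrix.single,
      Pi.single_apply, ite_and]
  rw [Hdiag, hdiag]
  rw [show (Xgl (∑ i, c i • Egl i i) : spC n) = XglL (∑ i, c i • Egl i i) from rfl,
    map_sum]
  simp [XglL]

end Aux

/-- For `FV` built from commuting nilpotent operators `T i` and `a` with
`aᵢ ∉ ℤ`, each summand `V^b` is exactly one generalized weight space of `FV` (with weight
`c ↦ ∑ᵢ cᵢ (aᵢ + bᵢ + ½)` on the Cartan element `Hdiag c`), and distinct `b`'s give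
distinct generalized weights. -/
theorem stmt11 (n : ℕ) [NeZero n] (a : Fin n → ℂ)
    (ha : ∀ i, a i ∉ Set.range (Int.cast : ℤ → ℂ))
    (V : Type*) [AddCommGroup V] [Module ℂ V] [FiniteDimensional ℂ V]
    (T : Fin n → Module.End ℂ V)
    (hTcomm : ∀ i j, Commute (T i) (T j)) (hTnil : ∀ i, IsNilpotent (T i))
    (π : spC n →ₗ⁅ℂ⁆ Module.End ℂ (Blat n →₀ V))
    (hXem : ∀ i j : Fin n, i ≠ j → ∀ (b : Blat n) (v : V),
      π (Xem i j) (Finsupp.single b v)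
        = Finsupp.single (b + dem i j) ((T j + (a j + (b.1 j : ℂ)) • 1) v))
    (hXep : ∀ (i j : Fin n) (b : Blat n) (v : V),
      π (Xep i j) (Finsupp.single b v) = Finsupp.single (b + dep i j) v)
    (hXm : ∀ i j : Fin n, i ≠ j → ∀ (b : Blat n) (v : V),
      π (Xm i j) (Finsupp.single b v)
        = Finsupp.single (b - dep i j)
            (((T i + (a i + (b.1 i : ℂ)) • 1) * (T j + (a j + (b.1 j : ℂ)) • 1)) v))
    (hXm2 : ∀ (i : Fin n) (b : Blat n) (v : V),
      π (Xm i i) (Finsupp.single b v)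
        = Finsupp.single (b - dep i i)
            (((T i + (a i + (b.1 i : ℂ)) • 1) * (T i + (a i + (b.1 i : ℂ) - 1) • 1)) v))
    (hHem : ∀ i j : Fin n, (j : ℕ) = (i : ℕ) + 1 → ∀ (b : Blat n) (v : V),
      π (Hem i j) (Finsupp.single b v)
        = Finsupp.single b
            ((T j - T i + (a j + (b.1 j : ℂ) - a i - (b.1 i : ℂ)) • 1) v))
    (hH2 : ∀ (b : Blat n) (v : V),
      π H2e1 (Finsupp.single b v)
        = Finsupp.single b
            (((1 / 2 : ℂ) • ((2 : ℂ) • T 0 + (2 * a 0 + 2 * (b.1 0 : ℂ) + 1) • 1)) v)) :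
    -- each `V^b` consists of generalized weight vectors of weight `c ↦ ∑ᵢ cᵢ(aᵢ+bᵢ+½)` :
    (∀ (b : Blat n) (v : V) (c : Fin n → ℂ), ∃ k : ℕ,
      ((π (Hdiag c) - (∑ i, c i * (a i + (b.1 i : ℂ) + 1 / 2)) • 1) ^ k) (Finsupp.single b v) = 0) ∧
    -- and `V^b` is the whole generalized weight space for this weight :
    (∀ (b : Blat n) (x : Blat n →₀ V),
      (∀ c : Fin n → ℂ, ∃ k : ℕ, ((π (Hdiag c) - (∑ i, c i * (a i + (b.1 i : ℂ) + 1 / 2)) • 1) ^ k) x = 0) →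
        x ∈ Set.range (Finsupp.single b : V → Blat n →₀ V)) ∧
    -- for `b ≠ b'` the generalized weights are distinct :
    (∀ b b' : Blat n, b ≠ b' →
      ∃ c : Fin n → ℂ,
        (∑ i, c i * (a i + (b.1 i : ℂ) + 1 / 2)) ≠ (∑ i, c i * (a i + (b'.1 i : ℂ) + 1 / 2))) := by
  
  classical
  -- the action of the diagonal Cartan elements `Xgl (Egl i i)`
  have key : ∀ (k : ℕ) (h : k < n) (b : Blat n) (v : V),
      π (Xgl (Egl ⟨k, h⟩ ⟨k, h⟩)) (Finsupp.single b v)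
        = Finsupp.single b
            ((T ⟨k, h⟩ + (a ⟨k, h⟩ + (b.1 ⟨k, h⟩ : ℂ) + 1 / 2) • 1) v) := by
    intro k
    induction k with
    | zero =>
      intro h b v
      have h0 : (⟨0, h⟩ : Fin n) = 0 := by
        ext; simp
      rw [h0]
      rw [show (Xgl (Egl (0 : Fin n) 0) : spC n) = H2e1 from rfl, hH2 b v]
      congr 1
      have hop : ((1 / 2 : ℂ) • ((2 : ℂ) • T 0
            + (2 * a 0 + 2 * (b.1 0 : ℂ) + 1) • (1 : Module.End ℂ V)))
          = T 0 + (a 0 + (b.1 0 : ℂ) + 1 / 2) • 1 := by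
        match_scalars <;> ring
      rw [hop]
    | succ k ih =>
      intro h b v
      have hk : k < n := Nat.lt_of_succ_lt h
      have hXglj : (Xgl (Egl (⟨k + 1, h⟩ : Fin n) ⟨k + 1, h⟩) : spC n)
          = Xgl (Egl (⟨k, hk⟩ : Fin n) ⟨k, hk⟩) + Hem ⟨k, hk⟩ ⟨k + 1, h⟩ := by
        rw [Hem, ← Xgl_add]
        congr 1
        abel
      rw [hXglj, map_add, LinearMap.add_apply, ih hk b v,
        hHem ⟨k, hk⟩ ⟨k + 1, h⟩ rfl b v, ← Finsupp.single_add]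
      congr 1
      rw [← LinearMap.add_apply]
      congr 1
      match_scalars <;> ring
  have key' : ∀ (i : Fin n) (b : Blat n) (v : V),
      π (Xgl (Egl i i)) (Finsupp.single b v)
        = Finsupp.single b ((T i + (a i + (b.1 i : ℂ) + 1 / 2) • 1) v) := by
    intro i b v
    have := key i.1 i.2 b v
    simpa using this
  -- the action of general Cartan elements
  have hdiag : ∀ (c : Fin n → ℂ) (b : Blat n) (v : V),
      π (Hdiag c) (Finsupp.single b v)
        = Finsupp.single b
            (((∑ i, c i • T i) + (∑ i, c i * (a i + (b.1 i : ℂ) + 1 / 2)) • 1) v) := by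
    intro c b v
    have hmap : π (Hdiag c) = ∑ i, c i • π (Xgl (Egl i i)) := by
      rw [Hdiag_eq_sum c, show (π : spC n → Module.End ℂ (Blat n →₀ V))
        = π.toLinearMap from rfl, map_sum]
      simp
    rw [hmap, LinearMap.sum_apply]
    have : ∀ i : Fin n, (c i • π (Xgl (Egl i i))) (Finsupp.single b v)
        = Finsupp.single b ((c i • (T i + (a i + (b.1 i : ℂ) + 1 / 2) • 1)) v) := by
      intro i
      rw [LinearMap.smul_apply, key' i b v, Finsupp.smul_single]
      rfl
    rw [Finset.sum_congr rfl fun i _ => this i]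
    rw [← Finsupp.single_finset_sum]
    congr 1
    simp only [LinearMap.smul_apply, LinearMap.add_apply, LinearMap.sum_apply,
      Module.End.one_apply, smul_add, smul_smul, Finset.sum_add_distrib,
      Finset.sum_smul]
  -- nilpotency of the `T`-part
  have hnil : ∀ c : Fin n → ℂ, IsNilpotent (∑ i, c i • T i) := by
    intro c
    apply Commute.isNilpotent_sum
    · intro i _
      exact (hTnil i).smul (c i)
    · intro i j _ _
      exact ((hTcomm i j).smul_left (c i)).smul_right (c j)
  -- one step of the shifted Cartan action, componentwise
  have hD1 : ∀ (c : Fin n → ℂ) (l : ℂ) (x : Blat n →₀ V) (b'' : Blat n),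
      ((π (Hdiag c) - l • 1) x) b''
        = ((∑ i, c i • T i)
            + ((∑ i, c i * (a i + (b''.1 i : ℂ) + 1 / 2)) - l) • 1) (x b'') := by
    intro c l x
    induction x using Finsupp.induction_linear with
    | zero => intro b''; simp
    | add f g hf hg =>
      intro b''
      rw [map_add, Finsupp.add_apply, hf b'', hg b'', Finsupp.add_apply, map_add]
    | single b v =>
      intro b''
      rw [LinearMap.sub_apply, hdiag c b v, LinearMap.smul_apply, Module.End.one_apply,
        Finsupp.sub_apply, Finsupp.smul_apply]
      by_cases hbb : b = b''
      · subst hbb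
        rw [Finsupp.single_eq_same, Finsupp.single_eq_same]
        simp only [LinearMap.add_apply, LinearMap.smul_apply, Module.End.one_apply]
        module
      · rw [Finsupp.single_eq_of_ne' hbb, Finsupp.single_eq_of_ne' hbb]
        simp
  -- powers of the shifted Cartan action, componentwise
  have hDpow : ∀ (c : Fin n → ℂ) (l : ℂ) (k : ℕ) (x : Blat n →₀ V) (b'' : Blat n),
      (((π (Hdiag c) - l • 1) ^ k) x) b''
        = (((∑ i, c i • T i)
            + ((∑ i, c i * (a i + (b''.1 i : ℂ) + 1 / 2)) - l) • 1) ^ k) (x b'') := by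
    intro c l k
    induction k with
    | zero => intro x b''; simp
    | succ k ih =>
      intro x b''
      rw [pow_succ', pow_succ', Module.End.mul_apply, Module.End.mul_apply,
        hD1 c l _ b'', ih x b'']
  -- weight separation for `b ≠ b'`
  have hsep : ∀ b b' : Blat n, b ≠ b' →
      ∃ c : Fin n → ℂ,
        (∑ i, c i * (a i + (b.1 i : ℂ) + 1 / 2))
          ≠ (∑ i, c i * (a i + (b'.1 i : ℂ) + 1 / 2)) := by
    intro b b' hbb
    have : ∃ i, b.1 i ≠ b'.1 i := by
      by_contra hcon
      push_neg at hcon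
      exact hbb (Subtype.ext (funext hcon))
    obtain ⟨i, hi⟩ := this
    refine ⟨Pi.single i 1, ?_⟩
    have hs : ∀ z : Fin n → ℂ,
        (∑ j, (Pi.single i 1 : Fin n → ℂ) j * z j) = z i := by
      intro z
      rw [Finset.sum_eq_single i]
      · simp
      · intro j _ hj
        simp [Pi.single_apply, hj]
      · simp
    rw [hs, hs]
    intro hcon
    apply hi
    have : ((b.1 i : ℂ)) = ((b'.1 i : ℂ)) := by linear_combination hcon
    exact_mod_cast this
  refine ⟨?_, ?_, hsep⟩
  · -- part 1
    intro b v c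
    obtain ⟨k, hk⟩ := hnil c
    refine ⟨k, ?_⟩
    ext b''
    rw [hDpow c _ k (Finsupp.single b v) b'']
    by_cases hbb : b = b''
    · subst hbb
      rw [Finsupp.single_eq_same]
      simp [hk]
    · rw [Finsupp.single_eq_of_ne' hbb]
      simp
  · -- part 2
    intro b x hx
    have hzero : ∀ b', b' ≠ b → x b' = 0 := by
      intro b' hb'
      obtain ⟨c, hc⟩ := hsep b' b hb'
      obtain ⟨k, hk⟩ := hx c
      have h0 := congrArg (fun y : Blat n →₀ V => y b') hk
      rw [hDpow] at h0
      set N : Module.End ℂ V := ∑ i, c i • T i with hN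
      set μ : ℂ := (∑ i, c i * (a i + (b'.1 i : ℂ) + 1 / 2))
        - (∑ i, c i * (a i + (b.1 i : ℂ) + 1 / 2)) with hμdef
      have hμ : μ ≠ 0 := sub_ne_zero.mpr hc
      have hu1 : IsUnit (μ • (1 : Module.End ℂ V)) := by
        rw [← Algebra.algebraMap_eq_smul_one]
        exact (isUnit_iff_ne_zero.2 hμ).map (algebraMap ℂ (Module.End ℂ V))
      have hu : IsUnit (N + μ • (1 : Module.End ℂ V)) :=
        (hnil c).isUnit_add_right_of_commute hu1
          ((Commute.one_right N).smul_right μ)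
      have hu2 := hu.pow k
      obtain ⟨u, hu2⟩ := hu2
      have : x b' = ((u⁻¹ : (Module.End ℂ V)ˣ) : Module.End ℂ V)
          (((N + μ • 1) ^ k) (x b')) := by
        rw [← Module.End.mul_apply, ← hu2, ← Units.val_mul, inv_mul_cancel]
        simp
      rw [this, h0]
      simp
    refine ⟨x b, ?_⟩
    ext b''
    by_cases hbb : b'' = b
    · subst hbb
      rw [Finsupp.single_eq_same]
    · rw [Finsupp.single_eq_of_ne' (Ne.symm hbb), hzero b'' hbb]
end

section
/- Any sp_{2n}-module homomorphism φ: FV → FW restricts on the zero component to a linear map f: V^0 → W^0 that commutes with all T_i, and φ = Ff; consequently the functor F is full and faithful. -/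
open Matrix

attribute [local instance 100] LieRing.ofAssociativeRing

variable {n : ℕ}

section Helpers

variable {ι : Type*} {M N : Type*} [AddCommGroup M] [Module ℂ M]
  [AddCommGroup N] [Module ℂ N]

lemma pw_apply (ψ : Module.End ℂ (ι →₀ M)) (G : ι → Module.End ℂ M)
    (h : ∀ b m, ψ (Finsupp.single b m) = Finsupp.single b (G b m))
    (u : ι →₀ M) (b : ι) : (ψ u) b = G b (u b) := by
  classical
  induction u using Finsupp.induction_linear with
  | zero => simp
  | add u v hu hv => simp [map_add, Finsupp.add_apply, hu, hv]
  | single b' m =>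
      rw [h]
      rcases eq_or_ne b' b with rfl | hne
      · simp
      · simp [Finsupp.single_eq_of_ne' hne]

lemma pw_pow_single (ψ : Module.End ℂ (ι →₀ M)) (G : ι → Module.End ℂ M)
    (h : ∀ b m, ψ (Finsupp.single b m) = Finsupp.single b (G b m))
    (k : ℕ) (b : ι) (m : M) :
    (ψ ^ k) (Finsupp.single b m) = Finsupp.single b ((G b ^ k) m) := by
  induction k generalizing m with
  | zero => simp
  | succ k ih =>
      rw [pow_succ, Module.End.mul_apply, h, ih, pow_succ, Module.End.mul_apply]

lemma pw_pow_apply (ψ : Module.End ℂ (ι →₀ M)) (G : ι → Module.End ℂ M)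
    (h : ∀ b m, ψ (Finsupp.single b m) = Finsupp.single b (G b m))
    (k : ℕ) (u : ι →₀ M) (b : ι) : ((ψ ^ k) u) b = (G b ^ k) (u b) :=
  pw_apply (ψ ^ k) (fun b => G b ^ k) (fun b m => pw_pow_single ψ G h k b m) u b

lemma comp_pow_eq (φ : M →ₗ[ℂ] N) (ψ : Module.End ℂ M) (ψ' : Module.End ℂ N)
    (h : ∀ x, φ (ψ x) = ψ' (φ x)) (k : ℕ) (x : M) :
    φ ((ψ ^ k) x) = (ψ' ^ k) (φ x) := by
  induction k generalizing x with
  | zero => simp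
  | succ k ih =>
      rw [pow_succ, Module.End.mul_apply, pow_succ, Module.End.mul_apply, ← h, ih]

lemma nilp_unit_inj (S : Module.End ℂ M) (c : ℂ) (hS : IsNilpotent S) (hc : c ≠ 0)
    (k : ℕ) (m : M) (h : ((S + c • 1) ^ k) m = 0) : m = 0 := by
  have h1 : IsUnit (c • (1 : Module.End ℂ M)) := by
    refine isUnit_iff_exists.2 ⟨c⁻¹ • 1, ?_, ?_⟩ <;>
      simp [smul_smul, hc, inv_mul_cancel₀, mul_inv_cancel₀]
  have hu : IsUnit (S + c • (1 : Module.End ℂ M)) :=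
    hS.isUnit_add_right_of_commute h1 ((Commute.one_right S).smul_right c)
  have := ((Module.End.isUnit_iff _).1 (hu.pow k)).injective
  apply this
  simpa using h

end Helpers

/-- Every homomorphism `φ : FV → FW` of `sp_{2n}(ℂ)`-modules restricts,
on the zero component, to a linear map `f : V → W` commuting with the `T i`'s, and
`φ = F f`; this `f` is unique, so the functor `F` is full and faithful. -/
theorem stmt14 (n : ℕ) [NeZero n] (a : Fin n → ℂ)
    (ha : ∀ i, a i ∉ Set.range (Int.cast : ℤ → ℂ))
    (V W : Type*) [AddCommGroup V] [Module ℂ V] [FiniteDimensional ℂ V]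
    [AddCommGroup W] [Module ℂ W] [FiniteDimensional ℂ W]
    (T : Fin n → Module.End ℂ V) (T' : Fin n → Module.End ℂ W)
    (hTcomm : ∀ i j, Commute (T i) (T j)) (hTnil : ∀ i, IsNilpotent (T i))
    (hTcomm' : ∀ i j, Commute (T' i) (T' j)) (hTnil' : ∀ i, IsNilpotent (T' i))
    (π : spC n →ₗ⁅ℂ⁆ Module.End ℂ (Blat n →₀ V))
    (π' : spC n →ₗ⁅ℂ⁆ Module.End ℂ (Blat n →₀ W))
    (hXem : ∀ i j : Fin n, i ≠ j → ∀ (b : Blat n) (v : V),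
      π (Xem i j) (Finsupp.single b v)
        = Finsupp.single (b + dem i j) ((T j + (a j + (b.1 j : ℂ)) • 1) v))
    (hXep : ∀ (i j : Fin n) (b : Blat n) (v : V),
      π (Xep i j) (Finsupp.single b v) = Finsupp.single (b + dep i j) v)
    (hXm : ∀ i j : Fin n, i ≠ j → ∀ (b : Blat n) (v : V),
      π (Xm i j) (Finsupp.single b v)
        = Finsupp.single (b - dep i j)
            (((T i + (a i + (b.1 i : ℂ)) • 1) * (T j + (a j + (b.1 j : ℂ)) • 1)) v))
    (hXm2 : ∀ (i : Fin n) (b : Blat n) (v : V),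
      π (Xm i i) (Finsupp.single b v)
        = Finsupp.single (b - dep i i)
            (((T i + (a i + (b.1 i : ℂ)) • 1) * (T i + (a i + (b.1 i : ℂ) - 1) • 1)) v))
    (hHem : ∀ i j : Fin n, (j : ℕ) = (i : ℕ) + 1 → ∀ (b : Blat n) (v : V),
      π (Hem i j) (Finsupp.single b v)
        = Finsupp.single b
            ((T j - T i + (a j + (b.1 j : ℂ) - a i - (b.1 i : ℂ)) • 1) v))
    (hH2 : ∀ (b : Blat n) (v : V),
      π H2e1 (Finsupp.single b v)
        = Finsupp.single b
            (((1 / 2 : ℂ) • ((2 : ℂ) • T 0 + (2 * a 0 + 2 * (b.1 0 : ℂ) + 1) • 1)) v))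
    (hXem' : ∀ i j : Fin n, i ≠ j → ∀ (b : Blat n) (v : W),
      π' (Xem i j) (Finsupp.single b v)
        = Finsupp.single (b + dem i j) ((T' j + (a j + (b.1 j : ℂ)) • 1) v))
    (hXep' : ∀ (i j : Fin n) (b : Blat n) (v : W),
      π' (Xep i j) (Finsupp.single b v) = Finsupp.single (b + dep i j) v)
    (hXm' : ∀ i j : Fin n, i ≠ j → ∀ (b : Blat n) (v : W),
      π' (Xm i j) (Finsupp.single b v)
        = Finsupp.single (b - dep i j)
            (((T' i + (a i + (b.1 i : ℂ)) • 1) * (T' j + (a j + (b.1 j : ℂ)) • 1)) v))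
    (hXm2' : ∀ (i : Fin n) (b : Blat n) (v : W),
      π' (Xm i i) (Finsupp.single b v)
        = Finsupp.single (b - dep i i)
            (((T' i + (a i + (b.1 i : ℂ)) • 1) * (T' i + (a i + (b.1 i : ℂ) - 1) • 1)) v))
    (hHem' : ∀ i j : Fin n, (j : ℕ) = (i : ℕ) + 1 → ∀ (b : Blat n) (v : W),
      π' (Hem i j) (Finsupp.single b v)
        = Finsupp.single b
            ((T' j - T' i + (a j + (b.1 j : ℂ) - a i - (b.1 i : ℂ)) • 1) v))
    (hH2' : ∀ (b : Blat n) (v : W),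
      π' H2e1 (Finsupp.single b v)
        = Finsupp.single b
            (((1 / 2 : ℂ) • ((2 : ℂ) • T' 0 + (2 * a 0 + 2 * (b.1 0 : ℂ) + 1) • 1)) v))
    (φ : (Blat n →₀ V) →ₗ[ℂ] (Blat n →₀ W))
    (hφ : ∀ x : spC n, φ ∘ₗ π x = π' x ∘ₗ φ) :
    ∃! f : V →ₗ[ℂ] W,
      (∀ i, f ∘ₗ T i = T' i ∘ₗ f) ∧
      φ = Finsupp.mapRange.linearMap (α := Blat n) f := by
  classical
  set fb : Blat n → (V →ₗ[ℂ] W) := fun b =>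
    (Finsupp.lapply b) ∘ₗ φ ∘ₗ (Finsupp.lsingle b) with hfbdef
  -- separation of components
  have hsep : ∀ (b b' : Blat n) (v : V), b' ≠ b → (φ (Finsupp.single b v)) b' = 0 := by
    intro b b' v hne
    -- find a separating Cartan element
    have hdi : (b.1 0 ≠ b'.1 0) ∨
        ∃ i j : Fin n, (j : ℕ) = (i : ℕ) + 1 ∧ b.1 j - b.1 i ≠ b'.1 j - b'.1 i := by
      by_contra hcon
      push_neg at hcon
      obtain ⟨h0, hd⟩ := hcon
      apply hne
      have hh : ∀ m : ℕ, ∀ hm : m < n, b'.1 ⟨m, hm⟩ = b.1 ⟨m, hm⟩ := by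
        intro m
        induction m with
        | zero =>
            intro hm
            have h00 : (⟨0, hm⟩ : Fin n) = 0 := by
              apply Fin.ext; simp
            rw [h00, h0]
        | succ m ih =>
            intro hm
            have hm' : m < n := Nat.lt_of_succ_lt hm
            have := hd ⟨m, hm'⟩ ⟨m + 1, hm⟩ rfl
            have hprev := ih hm'
            omega
      apply Subtype.ext
      funext k
      have := hh k.1 k.2
      simpa using this
    obtain ⟨H, GV, GW, S, S', c, c', hGVact, hGWact, hSnil, hS'nil, hGVb, hGWb', hcc⟩ :
        ∃ (H : spC n) (GV : Blat n → Module.End ℂ V) (GW : Blat n → Module.End ℂ W)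
          (S : Module.End ℂ V) (S' : Module.End ℂ W) (c c' : ℂ),
          (∀ (b'' : Blat n) (v : V),
            π H (Finsupp.single b'' v) = Finsupp.single b'' (GV b'' v)) ∧
          (∀ (b'' : Blat n) (w : W),
            π' H (Finsupp.single b'' w) = Finsupp.single b'' (GW b'' w)) ∧
          IsNilpotent S ∧ IsNilpotent S' ∧
          GV b = S + c • 1 ∧ GW b' = S' + c' • 1 ∧ c ≠ c' := by
      have hdecV : ∀ (x : ℂ),
          (1/2 : ℂ) • ((2 : ℂ) • T 0 + x • (1 : Module.End ℂ V))
            = T 0 + ((1/2 : ℂ) * x) • 1 := by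
        intro x
        rw [smul_add, smul_smul, smul_smul]
        norm_num
      have hdecW : ∀ (x : ℂ),
          (1/2 : ℂ) • ((2 : ℂ) • T' 0 + x • (1 : Module.End ℂ W))
            = T' 0 + ((1/2 : ℂ) * x) • 1 := by
        intro x
        rw [smul_add, smul_smul, smul_smul]
        norm_num
      rcases hdi with h0 | ⟨i, j, hij, hdiff⟩
      · refine ⟨H2e1,
          (fun b'' => (1/2 : ℂ) • ((2 : ℂ) • T 0 + (2 * a 0 + 2 * (b''.1 0 : ℂ) + 1) • 1)),
          (fun b'' => (1/2 : ℂ) • ((2 : ℂ) • T' 0 + (2 * a 0 + 2 * (b''.1 0 : ℂ) + 1) • 1)),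
          T 0, T' 0,
          (1/2 : ℂ) * (2 * a 0 + 2 * (b.1 0 : ℂ) + 1),
          (1/2 : ℂ) * (2 * a 0 + 2 * (b'.1 0 : ℂ) + 1),
          hH2, hH2', hTnil 0, hTnil' 0, hdecV _, hdecW _, ?_⟩
        intro h
        apply h0
        have : ((b.1 0 : ℤ) : ℂ) = ((b'.1 0 : ℤ) : ℂ) := by
          push_cast
          linear_combination h
        exact_mod_cast this
      · refine ⟨Hem i j,
          (fun b'' => T j - T i + (a j + (b''.1 j : ℂ) - a i - (b''.1 i : ℂ)) • 1),
          (fun b'' => T' j - T' i + (a j + (b''.1 j : ℂ) - a i - (b''.1 i : ℂ)) • 1),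
          T j - T i, T' j - T' i,
          (a j + (b.1 j : ℂ) - a i - (b.1 i : ℂ)),
          (a j + (b'.1 j : ℂ) - a i - (b'.1 i : ℂ)),
          hHem i j hij, hHem' i j hij,
          (hTcomm j i).isNilpotent_sub (hTnil j) (hTnil i),
          (hTcomm' j i).isNilpotent_sub (hTnil' j) (hTnil' i), rfl, rfl, ?_⟩
        intro h
        apply hdiff
        have : ((b.1 j - b.1 i : ℤ) : ℂ) = ((b'.1 j - b'.1 i : ℤ) : ℂ) := by
          push_cast
          linear_combination h
        exact_mod_cast this
    obtain ⟨k, hk⟩ := hSnil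
    have hstep : ∀ x, φ ((π H - c • 1) x) = (π' H - c • 1) (φ x) := by
      intro x
      have h1 : φ ((π H) x) = (π' H) (φ x) := LinearMap.congr_fun (hφ H) x
      simp [LinearMap.sub_apply, LinearMap.smul_apply, map_sub, _root_.map_smul, h1]
    have hGV' : ∀ (b'' : Blat n) (v : V),
        (π H - c • 1) (Finsupp.single b'' v)
          = Finsupp.single b'' ((GV b'' - c • 1) v) := by
      intro b'' v
      simp [LinearMap.sub_apply, LinearMap.smul_apply, hGVact, Finsupp.smul_single,
        Finsupp.single_sub]
    have hGW' : ∀ (b'' : Blat n) (w : W),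
        (π' H - c • 1) (Finsupp.single b'' w)
          = Finsupp.single b'' ((GW b'' - c • 1) w) := by
      intro b'' w
      simp [LinearMap.sub_apply, LinearMap.smul_apply, hGWact, Finsupp.smul_single,
        Finsupp.single_sub]
    have h2 : ((π H - c • 1) ^ k) (Finsupp.single b v) = 0 := by
      rw [pw_pow_single _ _ hGV' k b v]
      have hS : GV b - c • 1 = S := by rw [hGVb]; abel
      rw [hS, hk]
      simp
    have h3 : ((π' H - c • 1) ^ k) (φ (Finsupp.single b v)) = 0 := by
      rw [← comp_pow_eq φ _ _ hstep k, h2, map_zero]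
    have h4 : ((GW b' - c • 1) ^ k) ((φ (Finsupp.single b v)) b') = 0 := by
      rw [← pw_pow_apply (π' H - c • 1) _ hGW' k (φ (Finsupp.single b v)) b', h3]
      simp
    have h5 : GW b' - c • 1 = S' + (c' - c) • 1 := by
      rw [hGWb', sub_smul]; abel
    rw [h5] at h4
    exact nilp_unit_inj S' (c' - c) hS'nil (sub_ne_zero.2 (Ne.symm hcc)) k _ h4
  have hsingle : ∀ (b : Blat n) (v : V),
      φ (Finsupp.single b v) = Finsupp.single b (fb b v) := by
    intro b v
    ext b'
    rcases eq_or_ne b' b with rfl | hne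
    · simp [hfbdef]
    · rw [hsep b b' v hne, Finsupp.single_eq_of_ne' (Ne.symm hne)]
  -- invariance along dep shifts
  have hXepf : ∀ (i j : Fin n) (b : Blat n), fb (b + dep i j) = fb b := by
    intro i j b
    ext v
    have h1 := LinearMap.congr_fun (hφ (Xep i j)) (Finsupp.single b v)
    simp only [LinearMap.comp_apply] at h1
    rw [hXep i j b v, hsingle, hsingle b v, hXep' i j b (fb b v)] at h1
    have := congrArg (fun u => u (b + dep i j)) h1
    simpa using this
  have hzsmul : ∀ (g : Blat n), (∀ b, fb (b + g) = fb b) →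
      ∀ (k : ℤ) (b : Blat n), fb (b + k • g) = fb b := by
    intro g hg
    have hg' : ∀ b, fb (b - g) = fb b := by
      intro b
      have h2 := hg (b - g)
      rw [sub_add_cancel] at h2
      exact h2.symm
    intro k
    induction k using Int.induction_on with
    | zero => intro b; simp
    | succ m ih =>
        intro b
        have he : b + ((m : ℤ) + 1) • g = (b + (m : ℤ) • g) + g := by
          rw [add_smul, one_smul]; abel
        rw [he, hg, ih]
    | pred m ih =>
        intro b
        have he : b + (-(m : ℤ) - 1) • g = (b + (-(m : ℤ)) • g) - g := by
          rw [sub_smul, one_smul]; abel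
        rw [he, hg', ih]
  have hdem : ∀ (i : Fin n) (b' : Blat n), fb (b' + dem i 0) = fb b' := by
    intro i b'
    have hd : b' + dem i 0 = (b' - dep i 0) + dep i i := by
      apply Subtype.ext
      show b'.1 + (dem i 0).1 = (b'.1 - (dep i 0).1) + (dep i i).1
      simp only [dem, dep]
      abel
    rw [hd, hXepf i i]
    have h2 := hXepf i 0 (b' - dep i 0)
    rw [sub_add_cancel] at h2
    exact h2.symm
  have hsum : ∀ (s : Finset (Fin n)) (cf : Fin n → ℤ),
      fb (∑ i ∈ s, cf i • dem i 0) = fb 0 := by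
    intro s cf
    induction s using Finset.induction with
    | empty => simp
    | @insert j s hj ih =>
        rw [Finset.sum_insert hj, add_comm, hzsmul _ (hdem j) (cf j), ih]
  have hfb0 : ∀ b : Blat n, fb b = fb 0 := by
    intro b
    have hev : 2 * ((∑ i, b.1 i) / 2) = ∑ i, b.1 i := by
      obtain ⟨m, hm⟩ := b.2
      omega
    have hdecomp : b = (∑ i ∈ Finset.univ.erase (0 : Fin n), (b.1 i) • dem i 0)
        + ((∑ i, b.1 i) / 2) • dep 0 0 := by
      apply Subtype.ext
      have hco : ((∑ i ∈ Finset.univ.erase (0 : Fin n), (b.1 i) • dem i 0 : Blat n) : Fin n → ℤ)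
          = ∑ i ∈ Finset.univ.erase (0 : Fin n), (b.1 i) • ((dem i 0 : Blat n) : Fin n → ℤ) := by
        push_cast
        rfl
      show b.1 = _
      rw [AddSubgroup.coe_add, hco]
      funext kk
      simp only [Finset.sum_apply, Pi.add_apply, Pi.smul_apply, AddSubgroup.coe_zsmul,
        dem, dep, Pi.sub_apply, Pi.single_apply, smul_eq_mul]
      rcases eq_or_ne kk 0 with rfl | hkk
      · have h1 : ∀ x ∈ Finset.univ.erase (0 : Fin n),
            b.1 x * ((if (0:Fin n) = x then (1:ℤ) else 0)
              - if (0:Fin n) = (0:Fin n) then 1 else 0) = - b.1 x := by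
          intro x hx
          have hx0 : (0:Fin n) ≠ x := Ne.symm (Finset.mem_erase.1 hx).1
          simp [hx0]
        rw [Finset.sum_congr rfl h1, Finset.sum_neg_distrib,
            Finset.sum_erase_eq_sub (Finset.mem_univ (0:Fin n))]
        simp only [if_true, eq_self_iff_true]
        omega
      · simp [hkk, mul_ite, Finset.sum_ite_eq, Finset.mem_erase, Ne.symm hkk]
    calc fb b = fb ((∑ i ∈ Finset.univ.erase (0 : Fin n), (b.1 i) • dem i 0)
        + ((∑ i, b.1 i) / 2) • dep 0 0) := by rw [← hdecomp]
      _ = fb (∑ i ∈ Finset.univ.erase (0 : Fin n), (b.1 i) • dem i 0) := by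
          rw [hzsmul _ (hXepf 0 0) _]
      _ = fb 0 := hsum _ _
  set f : V →ₗ[ℂ] W := fb 0 with hfdef
  -- same-component relations
  have hrel : ∀ (H : spC n) (GV : Blat n → Module.End ℂ V) (GW : Blat n → Module.End ℂ W),
      (∀ (b : Blat n) (v : V), π H (Finsupp.single b v) = Finsupp.single b (GV b v)) →
      (∀ (b : Blat n) (w : W), π' H (Finsupp.single b w) = Finsupp.single b (GW b w)) →
      ∀ (b : Blat n) (v : V), fb b (GV b v) = GW b (fb b v) := by
    intro H GV GW hv hw b v
    have h1 := LinearMap.congr_fun (hφ H) (Finsupp.single b v)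
    simp only [LinearMap.comp_apply] at h1
    rw [hv, hsingle, hsingle b v, hw] at h1
    have := congrArg (fun u => u b) h1
    simpa using this
  have hT0 : ∀ v, f (T 0 v) = T' 0 (f v) := by
    intro v
    have h := hrel H2e1
      (fun b'' => (1/2 : ℂ) • ((2 : ℂ) • T 0 + (2 * a 0 + 2 * (b''.1 0 : ℂ) + 1) • 1))
      (fun b'' => (1/2 : ℂ) • ((2 : ℂ) • T' 0 + (2 * a 0 + 2 * (b''.1 0 : ℂ) + 1) • 1))
      hH2 hH2' 0 v
    simp only [LinearMap.smul_apply, LinearMap.add_apply, Module.End.one_apply,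
      smul_add, smul_smul, map_add, _root_.map_smul] at h
    rw [← hfdef] at h
    have h2 : (1/2 : ℂ) * 2 = 1 := by norm_num
    rw [h2, one_smul, one_smul] at h
    exact add_right_cancel h
  have hTadj : ∀ i j : Fin n, (j : ℕ) = (i : ℕ) + 1 →
      ∀ v, f (T j v) - f (T i v) = T' j (f v) - T' i (f v) := by
    intro i j hij v
    have h := hrel (Hem i j)
      (fun b'' => T j - T i + (a j + (b''.1 j : ℂ) - a i - (b''.1 i : ℂ)) • 1)
      (fun b'' => T' j - T' i + (a j + (b''.1 j : ℂ) - a i - (b''.1 i : ℂ)) • 1)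
      (hHem i j hij) (hHem' i j hij) 0 v
    simp only [LinearMap.add_apply, LinearMap.sub_apply, LinearMap.smul_apply,
      Module.End.one_apply, map_add, map_sub, _root_.map_smul] at h
    rw [← hfdef] at h
    exact add_right_cancel h
  have hTall : ∀ (i : Fin n) (v : V), f (T i v) = T' i (f v) := by
    have key : ∀ m : ℕ, ∀ hm : m < n, ∀ v, f (T ⟨m, hm⟩ v) = T' ⟨m, hm⟩ (f v) := by
      intro m
      induction m with
      | zero =>
          intro hm v
          have h00 : (⟨0, hm⟩ : Fin n) = 0 := by apply Fin.ext; simp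
          rw [h00]
          exact hT0 v
      | succ m ih =>
          intro hm v
          have hm' : m < n := Nat.lt_of_succ_lt hm
          have hadj := hTadj ⟨m, hm'⟩ ⟨m + 1, hm⟩ rfl v
          rw [ih hm' v] at hadj
          exact sub_left_inj.1 hadj
    intro i v
    have := key i.1 i.2 v
    simpa using this
  refine ⟨f, ⟨?_, ?_⟩, ?_⟩
  · intro i
    ext v
    exact hTall i v
  · apply Finsupp.lhom_ext
    intro b v
    rw [hsingle b v, hfb0 b]
    simp
  · rintro f' ⟨hc', hm'⟩
    ext v
    have h1 : φ (Finsupp.single (0 : Blat n) v) = Finsupp.single (0 : Blat n) (f' v) := by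
      rw [hm']
      simp
    have h2 : φ (Finsupp.single (0 : Blat n) v) = Finsupp.single (0 : Blat n) (f v) := by
      rw [hsingle, hfb0]
    have h3 := h1.symm.trans h2
    simpa using congrArg (fun u => u (0 : Blat n)) h3
end

section
/- Let P be a linear operator on a finite-dimensional ℂ-vector space such that P+1, P+2, P+3 are invertible, and suppose operators u, x commuting with P satisfy x = P(P+1)(P+3)^{-1}(P+2)^{-1} u and (P-1)(P+1)^{-1}x - (P+1)(P+3)^{-1}u = x - u + 4. Then u = (P+3)(P+2) and x = P(P+1). -/
private lemma comm_ring_inverse {R : Type*} [MonoidWithZero R] {a b : R}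
    (h : Commute a b) (hb : IsUnit b) : Commute a (Ring.inverse b) := by
  obtain ⟨v, rfl⟩ := hb
  rw [Ring.inverse_unit]
  exact h.units_inv_right

/-- If `P + 1`, `P + 2`, `P + 3` are invertible operators on a
finite-dimensional complex vector space, and `u`, `x` commute with `P` and satisfy
`x = P (P+1) (P+3)⁻¹ (P+2)⁻¹ u` and `(P-1)(P+1)⁻¹ x - (P+1)(P+3)⁻¹ u = x - u + 4`,
then `u = (P+3)(P+2)` and `x = P (P+1)`. -/
theorem stmt17 (V : Type*) [AddCommGroup V] [Module ℂ V] [FiniteDimensional ℂ V]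
    (P u x : Module.End ℂ V)
    (h1 : IsUnit (P + 1)) (h2 : IsUnit (P + 2)) (h3 : IsUnit (P + 3))
    (hu : Commute u P) (hx : Commute x P)
    (heq1 : x = P * (P + 1) * Ring.inverse (P + 3) * Ring.inverse (P + 2) * u)
    (heq2 : (P - 1) * Ring.inverse (P + 1) * x - (P + 1) * Ring.inverse (P + 3) * u
      = x - u + 4) :
    u = (P + 3) * (P + 2) ∧ x = P * (P + 1) := by
  set a := Ring.inverse (P + 1) with ha
  set b := Ring.inverse (P + 2) with hb
  set c := Ring.inverse (P + 3) with hc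
  -- commutation facts
  have cP1 : Commute P (P + 1) := (Commute.refl P).add_right (Commute.one_right P)
  have cP2 : Commute P (P + 2) := (Commute.refl P).add_right (Commute.ofNat_right P 2)
  have cP3 : Commute P (P + 3) := (Commute.refl P).add_right (Commute.ofNat_right P 3)
  have cPa : Commute P a := comm_ring_inverse cP1 h1
  have cPb : Commute P b := comm_ring_inverse cP2 h2
  have cPc : Commute P c := comm_ring_inverse cP3 h3
  have cua : Commute u a := comm_ring_inverse (hu.add_right (Commute.one_right u)) h1
  have cub : Commute u b := comm_ring_inverse (hu.add_right (Commute.ofNat_right u 2)) h2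
  have cuc : Commute u c := comm_ring_inverse (hu.add_right (Commute.ofNat_right u 3)) h3
  have cxa : Commute x a := comm_ring_inverse (hx.add_right (Commute.one_right x)) h1
  have cxb : Commute x b := comm_ring_inverse (hx.add_right (Commute.ofNat_right x 2)) h2
  have cxc : Commute x c := comm_ring_inverse (hx.add_right (Commute.ofNat_right x 3)) h3
  have cab : Commute a b :=
    comm_ring_inverse (cPa.symm.add_right (Commute.ofNat_right a 2)) h2
  have cac : Commute a c :=
    comm_ring_inverse (cPa.symm.add_right (Commute.ofNat_right a 3)) h3
  have cbc : Commute b c :=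
    comm_ring_inverse (cPb.symm.add_right (Commute.ofNat_right b 3)) h3
  have cux : Commute u x := by
    rw [heq1]
    exact (((hu.mul_right (hu.add_right (Commute.one_right u))).mul_right
      cuc).mul_right cub).mul_right (Commute.refl u)
  -- the commutative subring
  set s : Set (Module.End ℂ V) := {P, u, x, a, b, c} with hs
  have hcomm : ∀ y ∈ s, ∀ z ∈ s, y * z = z * y := by
    rintro y (rfl|rfl|rfl|rfl|rfl|rfl) z (rfl|rfl|rfl|rfl|rfl|rfl) <;>
      first
        | exact (Commute.refl _)
        | exact hu | exact hu.symm | exact hx | exact hx.symm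
        | exact cPa | exact cPa.symm | exact cPb | exact cPb.symm
        | exact cPc | exact cPc.symm
        | exact cua | exact cua.symm | exact cub | exact cub.symm
        | exact cuc | exact cuc.symm
        | exact cxa | exact cxa.symm | exact cxb | exact cxb.symm
        | exact cxc | exact cxc.symm
        | exact cab | exact cab.symm | exact cac | exact cac.symm
        | exact cbc | exact cbc.symm
        | exact cux | exact cux.symm
  set R := Subring.closure s with hR
  letI : CommRing R := Subring.closureCommRingOfComm hcomm
  have memP : P ∈ R := Subring.subset_closure (by simp [hs])
  have memu : u ∈ R := Subring.subset_closure (by simp [hs])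
  have memx : x ∈ R := Subring.subset_closure (by simp [hs])
  have mema : a ∈ R := Subring.subset_closure (by simp [hs])
  have memb : b ∈ R := Subring.subset_closure (by simp [hs])
  have memc : c ∈ R := Subring.subset_closure (by simp [hs])
  set p' : R := ⟨P, memP⟩ with hp'
  set u' : R := ⟨u, memu⟩ with hu'
  set x' : R := ⟨x, memx⟩ with hx'
  set a' : R := ⟨a, mema⟩ with ha'
  set b' : R := ⟨b, memb⟩ with hb'
  set c' : R := ⟨c, memc⟩ with hc'
  have cmul : ∀ y z : R, ((y * z : R) : Module.End ℂ V) = (y : Module.End ℂ V) * z := fun _ _ => rfl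
  have cadd : ∀ y z : R, ((y + z : R) : Module.End ℂ V) = (y : Module.End ℂ V) + z := fun _ _ => rfl
  have csub : ∀ y z : R, ((y - z : R) : Module.End ℂ V) = (y : Module.End ℂ V) - z := fun _ _ => rfl
  have cone : ((1 : R) : Module.End ℂ V) = 1 := rfl
  have c2 : ((2 : R) : Module.End ℂ V) = 2 := rfl
  have c3 : ((3 : R) : Module.End ℂ V) = 3 := rfl
  have c4 : ((4 : R) : Module.End ℂ V) = 4 := rfl
  have Ra : a' * (p' + 1) = 1 := by
    apply Subtype.ext
    simp only [cmul, cadd, cone]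
    exact Ring.inverse_mul_cancel _ h1
  have Rb : b' * (p' + 2) = 1 := by
    apply Subtype.ext
    simp only [cmul, cadd, cone, c2]
    exact Ring.inverse_mul_cancel _ h2
  have Rc : c' * (p' + 3) = 1 := by
    apply Subtype.ext
    simp only [cmul, cadd, cone, c3]
    exact Ring.inverse_mul_cancel _ h3
  have E1 : x' = p' * (p' + 1) * c' * b' * u' := by
    apply Subtype.ext
    simp only [cmul, cadd, cone]
    exact heq1
  have E2 : (p' - 1) * a' * x' - (p' + 1) * c' * u' = x' - u' + 4 := by
    apply Subtype.ext
    simp only [cmul, cadd, csub, cone, c4]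
    exact heq2
  have hx3 : x' * ((p' + 2) * (p' + 3)) = p' * (p' + 1) * u' := by
    linear_combination ((p' + 2) * (p' + 3)) * E1
      + p' * (p' + 1) * u' * b' * (p' + 2) * Rc + p' * (p' + 1) * u' * Rb
  have key : (p' + 1) * (4 * u') = (p' + 1) * (4 * ((p' + 3) * (p' + 2))) := by
    linear_combination ((p' + 1) * (p' + 2) * (p' + 3)) * E2
      - (p' - 1) * (p' + 2) * (p' + 3) * x' * Ra
      + (p' + 1) ^ 2 * (p' + 2) * u' * Rc + 2 * hx3
  have keyE : (P + 1) * (4 * u) = (P + 1) * (4 * ((P + 3) * (P + 2))) := by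
    have h := congrArg (Subtype.val) key
    simp only [cmul, cadd, cone, c2, c3, c4] at h
    exact h
  have h4 : (4 : Module.End ℂ V) * u = 4 * ((P + 3) * (P + 2)) := h1.mul_left_cancel keyE
  have hu4 : IsUnit (4 : Module.End ℂ V) := by
    have h := (isUnit_iff_ne_zero.2 (by norm_num : (4 : ℂ) ≠ 0)).map
      (algebraMap ℂ (Module.End ℂ V))
    rwa [map_ofNat] at h
  have uEq : u = (P + 3) * (P + 2) := hu4.mul_left_cancel h4
  refine ⟨uEq, ?_⟩
  have uR : u' = (p' + 3) * (p' + 2) := by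
    apply Subtype.ext
    simp only [cmul, cadd, cone, c2, c3]
    exact uEq
  have xR : x' = p' * (p' + 1) := by
    linear_combination E1 + p' * (p' + 1) * c' * b' * uR
      + p' * (p' + 1) * b' * (p' + 2) * Rc + p' * (p' + 1) * Rb
  have h := congrArg (Subtype.val) xR
  simp only [cmul, cadd, cone] at h
  exact h
end
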